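/- arXiv:1805.06232 — 10 statements merged into one kernel-verified Lean document; each statement's English description precedes it below -/
import Mathlib

section
/- Let r ∈ (1, 3/2]. Suppose an allocation x approximates the maximum Nash social welfare for the rounded problem (where every nonzero utility and every cap is rounded up to the next power of r) up to a factor γ. Then x approximates the maximum Nash social welfare for the original problem up to a factor γ·r. -/
open Finset

/-- The smallest power of `r` that is at least `t` (and `0` for `t = 0`). -/
noncomputable def roundPow (r t : ℝ) : ℝ :=
  if t = 0 then 0 else r ^ (⌈Real.logb r t⌉)

/-- Capped Nash social welfare of the allocation `x` with utilities `u` and caps `c`. -/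
noncomputable def nsw {n : ℕ} {I : Type*} [Fintype I]
    (u : Fin n → I → ℝ) (c : Fin n → ℝ) (x : I → Fin n) : ℝ :=
  (∏ i, min (c i) (∑ j ∈ univ.filter (fun j => x j = i), u i j)) ^ (1 / (n : ℝ))

lemma roundPow_nonneg {r : ℝ} (hr : 0 < r) (t : ℝ) : 0 ≤ roundPow r t := by
  unfold roundPow
  split
  · exact le_refl 0
  · positivity

lemma le_roundPow {r : ℝ} (hr : 1 < r) {t : ℝ} (ht : 0 ≤ t) : t ≤ roundPow r t := by
  unfold roundPow
  rcases eq_or_lt_of_le ht with h | h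
  · simp [← h]
  · rw [if_neg (ne_of_gt h)]
    have hr0 : (0:ℝ) < r := lt_trans one_pos hr
    calc t = r ^ (Real.logb r t) := (Real.rpow_logb hr0 (ne_of_gt hr) h).symm
    _ ≤ r ^ ((⌈Real.logb r t⌉ : ℝ)) :=
        Real.rpow_le_rpow_of_exponent_le hr.le (Int.le_ceil _)
    _ = r ^ (⌈Real.logb r t⌉) := Real.rpow_intCast _ _

lemma roundPow_le {r : ℝ} (hr : 1 < r) {t : ℝ} (ht : 0 ≤ t) : roundPow r t ≤ r * t := by
  unfold roundPow
  rcases eq_or_lt_of_le ht with h | h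
  · simp [← h]
  · rw [if_neg (ne_of_gt h)]
    have hr0 : (0:ℝ) < r := lt_trans one_pos hr
    calc (r : ℝ) ^ (⌈Real.logb r t⌉) = r ^ ((⌈Real.logb r t⌉ : ℝ)) :=
          (Real.rpow_intCast _ _).symm
    _ ≤ r ^ (Real.logb r t + 1) := Real.rpow_le_rpow_of_exponent_le hr.le
          (by linarith [Int.ceil_lt_add_one (Real.logb r t)])
    _ = r ^ (Real.logb r t) * r := by rw [Real.rpow_add hr0, Real.rpow_one]
    _ = t * r := by rw [Real.rpow_logb hr0 (ne_of_gt hr) h]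
    _ = r * t := mul_comm _ _

lemma prod_rpow_le {n : ℕ} {F G : Fin n → ℝ} (h0 : ∀ i, 0 ≤ F i) (h : ∀ i, F i ≤ G i) :
    (∏ i, F i) ^ (1 / (n : ℝ)) ≤ (∏ i, G i) ^ (1 / (n : ℝ)) :=
  Real.rpow_le_rpow (Finset.prod_nonneg fun i _ => h0 i)
    (Finset.prod_le_prod (fun i _ => h0 i) (fun i _ => h i)) (by positivity)

/-- If `x` approximates the maximum Nash social welfare of the problem with all nonzero
utilities and all caps rounded up to the next power of `r ∈ (1, 3/2]` up to factor `γ`,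
then `x` approximates the maximum Nash social welfare of the original (integral) problem
up to factor `γ·r`. -/
theorem approx_rounded_implies_approx_original {n : ℕ} (hn : 0 < n)
    {I : Type*} [Fintype I] (u : Fin n → I → ℕ) (c : Fin n → ℕ)
    (r γ : ℝ) (hr1 : 1 < r) (hr2 : r ≤ 3 / 2) (x : I → Fin n)
    (happrox : ∀ y : I → Fin n,
      nsw (fun i j => roundPow r (u i j)) (fun i => roundPow r (c i)) y ≤
        γ * nsw (fun i j => roundPow r (u i j)) (fun i => roundPow r (c i)) x) :
    ∀ y : I → Fin n,
      nsw (fun i j => (u i j : ℝ)) (fun i => (c i : ℝ)) y ≤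
        γ * r * nsw (fun i j => (u i j : ℝ)) (fun i => (c i : ℝ)) x := by
  intro y
  have hr0 : (0:ℝ) < r := lt_trans one_pos hr1
  have hfac0 : ∀ (z : I → Fin n) (i : Fin n),
      (0:ℝ) ≤ min ((c i : ℝ)) (∑ j ∈ univ.filter (fun j => z j = i), (u i j : ℝ)) := by
    intro z i
    exact le_min (by positivity) (Finset.sum_nonneg fun j _ => by positivity)
  have hfac0' : ∀ (z : I → Fin n) (i : Fin n),
      (0:ℝ) ≤ min (roundPow r (c i))
        (∑ j ∈ univ.filter (fun j => z j = i), roundPow r (u i j)) := by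
    intro z i
    exact le_min (roundPow_nonneg hr0 _)
      (Finset.sum_nonneg fun j _ => roundPow_nonneg hr0 _)
  -- original nsw ≤ rounded nsw
  have key1 : ∀ z : I → Fin n,
      nsw (fun i j => (u i j : ℝ)) (fun i => (c i : ℝ)) z ≤
        nsw (fun i j => roundPow r (u i j)) (fun i => roundPow r (c i)) z := by
    intro z
    apply prod_rpow_le (fun i => hfac0 z i)
    intro i
    exact min_le_min (le_roundPow hr1 (by positivity))
      (Finset.sum_le_sum fun j _ => le_roundPow hr1 (by positivity))
  -- rounded nsw ≤ r * original nsw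
  have key2 : ∀ z : I → Fin n,
      nsw (fun i j => roundPow r (u i j)) (fun i => roundPow r (c i)) z ≤
        r * nsw (fun i j => (u i j : ℝ)) (fun i => (c i : ℝ)) z := by
    intro z
    unfold nsw
    have step : (∏ i, min (roundPow r (c i))
        (∑ j ∈ univ.filter (fun j => z j = i), roundPow r (u i j))) ^ (1 / (n : ℝ)) ≤
        (∏ i, r * min ((c i : ℝ))
          (∑ j ∈ univ.filter (fun j => z j = i), (u i j : ℝ))) ^ (1 / (n : ℝ)) := by
      apply prod_rpow_le (fun i => hfac0' z i)
      intro i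
      have h1 : roundPow r (c i) ≤ r * (c i : ℝ) := roundPow_le hr1 (by positivity)
      have h2 : (∑ j ∈ univ.filter (fun j => z j = i), roundPow r (u i j)) ≤
          r * ∑ j ∈ univ.filter (fun j => z j = i), (u i j : ℝ) := by
        rw [Finset.mul_sum]
        exact Finset.sum_le_sum fun j _ => roundPow_le hr1 (by positivity)
      calc min (roundPow r (c i))
            (∑ j ∈ univ.filter (fun j => z j = i), roundPow r (u i j)) ≤
          min (r * (c i : ℝ)) (r * ∑ j ∈ univ.filter (fun j => z j = i), (u i j : ℝ)) :=
            min_le_min h1 h2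
        _ = r * min ((c i : ℝ)) (∑ j ∈ univ.filter (fun j => z j = i), (u i j : ℝ)) :=
            (mul_min_of_nonneg _ _ hr0.le).symm
    refine step.trans (le_of_eq ?_)
    rw [Finset.prod_mul_distrib, Finset.prod_const, Finset.card_univ, Fintype.card_fin]
    rw [Real.mul_rpow (by positivity) (Finset.prod_nonneg fun i _ => hfac0 z i)]
    congr 1
    rw [← Real.rpow_natCast r n, ← Real.rpow_mul hr0.le,
      mul_one_div, div_self (by exact_mod_cast hn.ne'), Real.rpow_one]
  have hnn : ∀ z : I → Fin n,
      0 ≤ nsw (fun i j => (u i j : ℝ)) (fun i => (c i : ℝ)) z := by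
    intro z
    unfold nsw
    exact Real.rpow_nonneg (Finset.prod_nonneg fun i _ => hfac0 z i) _
  have hnnR : ∀ z : I → Fin n,
      0 ≤ nsw (fun i j => roundPow r (u i j)) (fun i => roundPow r (c i)) z := by
    intro z
    unfold nsw
    exact Real.rpow_nonneg (Finset.prod_nonneg fun i _ => hfac0' z i) _
  set Nx := nsw (fun i j => roundPow r (u i j)) (fun i => roundPow r (c i)) x with hNx
  rcases eq_or_lt_of_le (hnnR x) with hz | hz
  · -- rounded nsw of x is zero, hence original nsw of x is zero and everything is zero
    have hx0 : nsw (fun i j => (u i j : ℝ)) (fun i => (c i : ℝ)) x = 0 :=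
      le_antisymm (by rw [hz] at *; exact (key1 x).trans (le_of_eq rfl)) (hnn x)
    have hy : nsw (fun i j => (u i j : ℝ)) (fun i => (c i : ℝ)) y ≤ γ * Nx :=
      (key1 y).trans (happrox y)
    have h0 : γ * Nx = 0 := by rw [hNx, ← hz, mul_zero]
    calc nsw (fun i j => (u i j : ℝ)) (fun i => (c i : ℝ)) y ≤ γ * Nx := hy
      _ = 0 := h0
      _ = γ * r * nsw (fun i j => (u i j : ℝ)) (fun i => (c i : ℝ)) x := by
          rw [hx0]; ring
  · have hγ : 1 ≤ γ := by
      have := happrox x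
      rw [← hNx] at this
      nlinarith
    calc nsw (fun i j => (u i j : ℝ)) (fun i => (c i : ℝ)) y
        ≤ γ * Nx := (key1 y).trans (happrox y)
      _ ≤ γ * (r * nsw (fun i j => (u i j : ℝ)) (fun i => (c i : ℝ)) x) :=
          mul_le_mul_of_nonneg_left (key2 x) (by linarith)
      _ = γ * r * nsw (fun i j => (u i j : ℝ)) (fun i => (c i : ℝ)) x := by ring
end

section
/- Suppose an integral allocation x, prices p, and MBB values α satisfy: for every agent i and good j, u_{i,j,m(j,x_i)+1}/p_j ≤ α_i ≤ u_{i,j,m(j,x_i)}/p_j (with the conventions that the upper bound is +∞ if m(j,x_i)=0 and the lower bound is 0 if all copies of j are assigned to i). If for uncapped agent i and agent k there exists a good g ∈ x_k with P_k(x_k − g) ≤ (1+4ε)·P_i(x_i), where P_a(S) = u_a(S)/α_a, then u_i(x_k − g) ≤ (2+4ε)·u_i(x_i). -/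
open Finset

/-!
Let `S = x_k − g`. For every good, the copies of `S` beyond agent `i`'s own share are copies `i`
does not hold, each worth at most `α_i p_j` to `i` by the MBB condition; so
`u_i(S) ≤ u_i(x_i) + α_i p(S)`. Conversely every copy in `S ⊆ x_k` is worth at least `α_k p_j`
to `k`, so `α_k p(S) ≤ u_k(S)`. Together with `P_k(S) ≤ (1+4ε) P_i(x_i)` this gives
`α_i p(S) ≤ (1+4ε) u_i(x_i)`, hence the claim.
-/

/-- Utility of a multiset bundle `S` (given by its multiplicity function) for an agent
with per-copy utilities `u j ℓ` (the utility of the `(ℓ+1)`-st copy of good `j`). -/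
noncomputable def bundleUtil {m : ℕ} (u : Fin m → ℕ → ℝ) (S : Fin m → ℕ) : ℝ :=
  ∑ j, ∑ ℓ ∈ Finset.range (S j), u j ℓ

noncomputable def bundlePrice {m : ℕ} (p : Fin m → ℝ) (S : Fin m → ℕ) : ℝ :=
  ∑ j, (S j : ℝ) * p j

section OneGood

variable {v : ℕ → ℝ} {c : ℝ} {a b : ℕ}

theorem sum_range_le_sum_range_add_mul (hv : Antitone v) (hnn : ∀ ℓ, 0 ≤ v ℓ) (hc : 0 ≤ c)
    (hub : a < b → v a ≤ c) :
    ∑ ℓ ∈ range b, v ℓ ≤ ∑ ℓ ∈ range a, v ℓ + b * c := by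
  rcases le_or_gt b a with hba | hab
  · have hsub : ∑ ℓ ∈ range b, v ℓ ≤ ∑ ℓ ∈ range a, v ℓ :=
      sum_le_sum_of_subset_of_nonneg (range_subset_range.2 hba) fun ℓ _ _ => hnn ℓ
    have : 0 ≤ (b : ℝ) * c := by positivity
    linarith
  · rw [← sum_range_add_sum_Ico v hab.le]
    have htail : ∑ ℓ ∈ Ico a b, v ℓ ≤ (b - a : ℕ) * c := by
      simpa using sum_le_card_nsmul (Ico a b) v c fun ℓ hℓ =>
        (hv (mem_Ico.1 hℓ).1).trans (hub hab)
    have : ((b - a : ℕ) : ℝ) * c ≤ b * c :=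
      mul_le_mul_of_nonneg_right (by exact_mod_cast Nat.sub_le b a) hc
    linarith

theorem mul_le_sum_range (hv : Antitone v) (hba : b ≤ a) (hlb : 0 < a → c ≤ v (a - 1)) :
    b * c ≤ ∑ ℓ ∈ range b, v ℓ := by
  simpa using card_nsmul_le_sum (range b) v c fun ℓ hℓ =>
    (hlb (by grind)).trans (hv (by grind))

end OneGood

section Bundle

variable {m : ℕ} {v : Fin m → ℕ → ℝ} {β : ℝ} {p : Fin m → ℝ} {S x : Fin m → ℕ}

theorem bundleUtil_le_add_mul_bundlePrice (hv : ∀ j, Antitone (v j)) (hnn : ∀ j ℓ, 0 ≤ v j ℓ)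
    (hβ : 0 ≤ β) (hp : ∀ j, 0 ≤ p j) (hub : ∀ j, x j < S j → v j (x j) ≤ β * p j) :
    bundleUtil v S ≤ bundleUtil v x + β * bundlePrice p S := by
  simp only [bundleUtil, bundlePrice, mul_sum, ← sum_add_distrib]
  refine sum_le_sum fun j _ => ?_
  rw [mul_left_comm]
  exact sum_range_le_sum_range_add_mul (hv j) (hnn j) (mul_nonneg hβ (hp j)) (hub j)

theorem mul_bundlePrice_le_bundleUtil (hv : ∀ j, Antitone (v j)) (hS : ∀ j, S j ≤ x j)
    (hlb : ∀ j, 0 < x j → β * p j ≤ v j (x j - 1)) :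
    β * bundlePrice p S ≤ bundleUtil v S := by
  simp only [bundleUtil, bundlePrice, mul_sum]
  refine sum_le_sum fun j _ => ?_
  rw [mul_left_comm]
  exact mul_le_sum_range (hv j) (hS j) (hlb j)

end Bundle

theorem envy_up_to_one_factor_two_general {n m : ℕ} (kcopies : Fin m → ℕ)
    (u : Fin n → Fin m → ℕ → ℝ)
    (hmono : ∀ i j ℓ, u i j (ℓ + 1) ≤ u i j ℓ)
    (hnn : ∀ i j ℓ, 0 ≤ u i j ℓ)
    (α : Fin n → ℝ) (p : Fin m → ℝ) (hα : ∀ i, 0 < α i) (hp : ∀ j, 0 < p j)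
    (x : Fin n → Fin m → ℕ) (halloc : ∀ j, ∑ i, x i j = kcopies j)
    (hub : ∀ i j, x i j < kcopies j → u i j (x i j) ≤ α i * p j)
    (hlb : ∀ i j, 0 < x i j → α i * p j ≤ u i j (x i j - 1))
    (ε : ℝ) (i k : Fin n) (g : Fin m)
    (hP : bundleUtil (u k) (Function.update (x k) g (x k g - 1)) / α k ≤
      (1 + 4 * ε) * (bundleUtil (u i) (x i) / α i)) :
    bundleUtil (u i) (Function.update (x k) g (x k g - 1)) ≤
      (2 + 4 * ε) * bundleUtil (u i) (x i) := by
  set S := Function.update (x k) g (x k g - 1)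
  have hanti : ∀ a j, Antitone (u a j) := fun a j => antitone_nat_of_succ_le (hmono a j)
  have hSle : ∀ j, S j ≤ x k j := fun j => by
    rcases eq_or_ne j g with rfl | hj <;> simp [S, Function.update_of_ne, *]
  have hroom : ∀ j, x i j < S j → x i j < kcopies j := fun j hj => by
    have hik : i ≠ k := by rintro rfl; exact absurd (hSle j) (not_le.2 hj)
    have := halloc j ▸ add_le_sum (fun a _ => Nat.zero_le (x a j)) (mem_univ i) (mem_univ k) hik
    have := hSle j
    omega
  have hi := bundleUtil_le_add_mul_bundlePrice (hanti i) (hnn i) (hα i).le (fun j => (hp j).le)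
    fun j hj => hub i j (hroom j hj)
  have hk := mul_bundlePrice_le_bundleUtil (p := p) (hanti k) hSle (hlb k)
  have hprice : α i * bundlePrice p S ≤ (1 + 4 * ε) * bundleUtil (u i) (x i) :=
    calc α i * bundlePrice p S ≤ α i * (bundleUtil (u k) S / α k) := by
          gcongr
          · exact (hα i).le
          · rwa [le_div_iff₀ (hα k), mul_comm]
      _ ≤ α i * ((1 + 4 * ε) * (bundleUtil (u i) (x i) / α i)) := by gcongr; exact (hα i).le
      _ = (1 + 4 * ε) * bundleUtil (u i) (x i) := by field_simp [(hα i).ne']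
  linarith

/-- Suppose an integral allocation `x`, prices `p` and MBB values `α` satisfy
the MBB interval condition `u_{i,j,m(j,x_i)+1} ≤ α_i p_j ≤ u_{i,j,m(j,x_i)}`
(with the boundary conventions). If for agents `i` and `k` there is a good `g ∈ x_k`
with `P_k(x_k − g) ≤ (1+4ε)·P_i(x_i)`, where `P_a(S) = u_a(S)/α_a`, then
`u_i(x_k − g) ≤ (2+4ε)·u_i(x_i)`. -/
theorem envy_up_to_one_factor_two {n m : ℕ} (kcopies : Fin m → ℕ)
    (u : Fin n → Fin m → ℕ → ℝ)
    (hmono : ∀ i j ℓ, u i j (ℓ + 1) ≤ u i j ℓ)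
    (hnn : ∀ i j ℓ, 0 ≤ u i j ℓ)
    (α : Fin n → ℝ) (p : Fin m → ℝ) (hα : ∀ i, 0 < α i) (hp : ∀ j, 0 < p j)
    (x : Fin n → Fin m → ℕ) (halloc : ∀ j, ∑ i, x i j = kcopies j)
    (hub : ∀ i j, x i j < kcopies j → u i j (x i j) ≤ α i * p j)
    (hlb : ∀ i j, 0 < x i j → α i * p j ≤ u i j (x i j - 1))
    (ε : ℝ) (hε : 0 < ε) (i k : Fin n) (g : Fin m) (hg : 0 < x k g)
    (hP : bundleUtil (u k) (Function.update (x k) g (x k g - 1)) / α k ≤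
      (1 + 4 * ε) * (bundleUtil (u i) (x i) / α i)) :
    bundleUtil (u i) (Function.update (x k) g (x k g - 1)) ≤
      (2 + 4 * ε) * bundleUtil (u i) (x i) :=
  envy_up_to_one_factor_two_general kcopies u hmono hnn α p hα hp x halloc hub hlb ε i k g hP
end

section
/- Under the MBB conditions u_{i,j,ℓ}/p_j ≤ α_i for ℓ > m(j,x_i) and u_{k,j,ℓ}/p_j ≥ α_k for ℓ ≤ m(j,x_k), for any agent i and any bundle y that is a sub-multiset of x_k for some agent k: u_i(x_i ∪ y) ≤ u_i(x_i) + α_i · P_k(y), where P_k(y) = u_k(y)/α_k. -/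
open Finset

/-- Under the MBB conditions `u_{a,j,ℓ}/p_j ≤ α_a` for `ℓ > m(j,x_a)` and
`u_{a,j,ℓ}/p_j ≥ α_a` for `ℓ ≤ m(j,x_a)`, for any agents `i`, `k` and any
sub-multiset `y` of `x_k`: `u_i(x_i ∪ y) ≤ u_i(x_i) + α_i · P_k(y)`, where
`P_k(y) = u_k(y)/α_k`. -/
theorem util_union_le {n m : ℕ} (u : Fin n → Fin m → ℕ → ℝ)
    (hmono : ∀ a j ℓ, u a j (ℓ + 1) ≤ u a j ℓ)
    (hnn : ∀ a j ℓ, 0 ≤ u a j ℓ)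
    (α : Fin n → ℝ) (p : Fin m → ℝ) (hα : ∀ a, 0 < α a) (hp : ∀ j, 0 < p j)
    (x : Fin n → Fin m → ℕ)
    (hub : ∀ a j ℓ, x a j ≤ ℓ → u a j ℓ ≤ α a * p j)
    (hlb : ∀ a j ℓ, ℓ < x a j → α a * p j ≤ u a j ℓ)
    (i k : Fin n) (y : Fin m → ℕ) (hy : ∀ j, y j ≤ x k j) :
    bundleUtil (u i) (fun j => x i j + y j) ≤
      bundleUtil (u i) (x i) + α i * (bundleUtil (u k) y / α k) := by
  have key : bundleUtil (u i) (fun j => x i j + y j) =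
      bundleUtil (u i) (x i) + ∑ j, ∑ ℓ ∈ Finset.range (y j), u i j (x i j + ℓ) := by
    unfold bundleUtil
    rw [← Finset.sum_add_distrib]
    exact Finset.sum_congr rfl fun j _ => Finset.sum_range_add _ _ _
  rw [key]
  gcongr
  have h1 : ∑ j, ∑ ℓ ∈ Finset.range (y j), u i j (x i j + ℓ) ≤
      α i * ∑ j, (y j : ℝ) * p j := by
    rw [Finset.mul_sum]
    refine Finset.sum_le_sum fun j _ => ?_
    calc ∑ ℓ ∈ Finset.range (y j), u i j (x i j + ℓ)
        ≤ ∑ _ℓ ∈ Finset.range (y j), α i * p j :=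
          Finset.sum_le_sum fun ℓ _ => hub i j _ (Nat.le_add_right _ _)
      _ = (y j : ℝ) * (α i * p j) := by
          rw [Finset.sum_const, Finset.card_range, nsmul_eq_mul]
      _ = α i * ((y j : ℝ) * p j) := by ring
  have h2 : ∑ j, (y j : ℝ) * p j ≤ bundleUtil (u k) y / α k := by
    rw [le_div_iff₀ (hα k)]
    unfold bundleUtil
    rw [Finset.sum_mul]
    refine Finset.sum_le_sum fun j _ => ?_
    calc (y j : ℝ) * p j * α k = ∑ _ℓ ∈ Finset.range (y j), α k * p j := by
          rw [Finset.sum_const, Finset.card_range, nsmul_eq_mul]; ring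
      _ ≤ ∑ ℓ ∈ Finset.range (y j), u k j ℓ :=
          Finset.sum_le_sum fun ℓ hℓ =>
            hlb k j ℓ (lt_of_lt_of_le (Finset.mem_range.mp hℓ) (hy j))
  calc ∑ j, ∑ ℓ ∈ Finset.range (y j), u i j (x i j + ℓ)
      ≤ α i * ∑ j, (y j : ℝ) * p j := h1
    _ ≤ α i * (bundleUtil (u k) y / α k) :=
        mul_le_mul_of_nonneg_left h2 (le_of_lt (hα i))
end

section
/- Suppose an allocation x, prices p, and MBB values α satisfy for all agents i and goods j: u_{i,j,m(j,x_i)+1} ≤ α_i·p_j ≤ u_{i,j,m(j,x_i)} (with the usual conventions at the boundary). Then for every allocation y, Σ_i u_i(y_i)/α_i ≤ Σ_i u_i(x_i)/α_i; i.e., x maximizes the α-scaled social welfare. -/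
/-!
Each `u_i` is concave along every good, so the interval condition makes `α_i p` a supergradient
of `u_i` at `x_i`: `u_i(y_i) - u_i(x_i) ≤ α_i Σ_j p_j (y_{ij} - x_{ij})`. Dividing by `α_i` and
summing over agents, the right-hand side vanishes because `x` and `y` hand out the same number of
copies of every good.
-/

open Finset

theorem Antitone.sum_range_sub_sum_range_le {u : ℕ → ℝ} (hu : Antitone u) {a b : ℕ} {c : ℝ}
    (hup : a < b → u a ≤ c) (hdown : b < a → c ≤ u (a - 1)) :
    ∑ ℓ ∈ range b, u ℓ - ∑ ℓ ∈ range a, u ℓ ≤ c * ((b : ℝ) - a) := by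
  rcases lt_trichotomy a b with hab | rfl | hba
  · rw [← sum_Ico_eq_sub u hab.le]
    calc ∑ ℓ ∈ Ico a b, u ℓ ≤ #(Ico a b) • c :=
          sum_le_card_nsmul _ _ _ fun ℓ hℓ => (hu (mem_Ico.mp hℓ).1).trans (hup hab)
      _ = c * ((b : ℝ) - a) := by
          rw [Nat.card_Ico, nsmul_eq_mul, Nat.cast_sub hab.le, mul_comm]
  · simp
  · suffices c * ((a : ℝ) - b) ≤ ∑ ℓ ∈ Ico b a, u ℓ by
      rw [sum_Ico_eq_sub u hba.le] at this
      linarith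
    calc c * ((a : ℝ) - b) = #(Ico b a) • c := by
          rw [Nat.card_Ico, nsmul_eq_mul, Nat.cast_sub hba.le, mul_comm]
      _ ≤ ∑ ℓ ∈ Ico b a, u ℓ :=
          card_nsmul_le_sum _ _ _ fun ℓ hℓ =>
            (hdown hba).trans (hu (Nat.le_sub_one_of_lt (mem_Ico.mp hℓ).2))

theorem bundleUtil_sub_le {m : ℕ} {u : Fin m → ℕ → ℝ} (hu : ∀ j, Antitone (u j))
    {S T : Fin m → ℕ} {c : Fin m → ℝ}
    (hup : ∀ j, S j < T j → u j (S j) ≤ c j) (hdown : ∀ j, T j < S j → c j ≤ u j (S j - 1)) :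
    bundleUtil u T - bundleUtil u S ≤ ∑ j, c j * ((T j : ℝ) - S j) := by
  rw [bundleUtil, bundleUtil, ← sum_sub_distrib]
  exact sum_le_sum fun j _ => (hu j).sum_range_sub_sum_range_le (hup j) (hdown j)

theorem sum_sum_mul_sub_eq_zero {n m : ℕ} (p : Fin m → ℝ) {x y : Fin n → Fin m → ℕ}
    (hxy : ∀ j, ∑ i, y i j = ∑ i, x i j) :
    ∑ i, ∑ j, p j * ((y i j : ℝ) - x i j) = 0 := by
  rw [sum_comm]
  refine sum_eq_zero fun j _ => ?_
  rw [← mul_sum, sum_sub_distrib, ← Nat.cast_sum, ← Nat.cast_sum, hxy j, sub_self, mul_zero]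

theorem mbb_implies_scaled_sw_max_general {n m : ℕ} (kcopies : Fin m → ℕ)
    (u : Fin n → Fin m → ℕ → ℝ)
    (hmono : ∀ i j ℓ, u i j (ℓ + 1) ≤ u i j ℓ)
    (α : Fin n → ℝ) (p : Fin m → ℝ) (hα : ∀ i, 0 < α i)
    (x : Fin n → Fin m → ℕ) (halloc : ∀ j, ∑ i, x i j = kcopies j)
    (hub : ∀ i j, x i j < kcopies j → u i j (x i j) ≤ α i * p j)
    (hlb : ∀ i j, 0 < x i j → α i * p j ≤ u i j (x i j - 1)) :
    ∀ y : Fin n → Fin m → ℕ, (∀ j, ∑ i, y i j = kcopies j) →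
      ∑ i, bundleUtil (u i) (y i) / α i ≤ ∑ i, bundleUtil (u i) (x i) / α i := by
  intro y hy
  have hyk : ∀ i j, y i j ≤ kcopies j := fun i j =>
    hy j ▸ single_le_sum (f := fun i => y i j) (fun _ _ => Nat.zero_le _) (mem_univ i)
  have hagent : ∀ i, bundleUtil (u i) (y i) / α i - bundleUtil (u i) (x i) / α i
      ≤ ∑ j, p j * ((y i j : ℝ) - x i j) := by
    intro i
    have hsupergrad := bundleUtil_sub_le (u := u i) (S := x i) (T := y i)
      (fun j => antitone_nat_of_succ_le (hmono i j))
      (fun j hlt => hub i j (hlt.trans_le (hyk i j))) (fun j hlt => hlb i j (by omega))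
    simp only [mul_assoc, ← mul_sum] at hsupergrad
    rw [← sub_div, div_le_iff₀ (hα i), mul_comm]
    exact hsupergrad
  have htotal := sum_le_sum fun i (_ : i ∈ univ) => hagent i
  rw [sum_sub_distrib, sum_sum_mul_sub_eq_zero p fun j => (hy j).trans (halloc j).symm] at htotal
  linarith

/-- If `(x, p, α)` satisfies the MBB interval condition
`u_{i,j,m(j,x_i)+1} ≤ α_i·p_j ≤ u_{i,j,m(j,x_i)}` (with the boundary conventions),
then `x` maximizes the `α`-scaled social welfare `Σ_i u_i(·)/α_i` over all
integral allocations. -/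
theorem mbb_implies_scaled_sw_max {n m : ℕ} (kcopies : Fin m → ℕ)
    (u : Fin n → Fin m → ℕ → ℝ)
    (hmono : ∀ i j ℓ, u i j (ℓ + 1) ≤ u i j ℓ)
    (hnn : ∀ i j ℓ, 0 ≤ u i j ℓ)
    (α : Fin n → ℝ) (p : Fin m → ℝ) (hα : ∀ i, 0 < α i) (hp : ∀ j, 0 < p j)
    (x : Fin n → Fin m → ℕ) (halloc : ∀ j, ∑ i, x i j = kcopies j)
    (hub : ∀ i j, x i j < kcopies j → u i j (x i j) ≤ α i * p j)
    (hlb : ∀ i j, 0 < x i j → α i * p j ≤ u i j (x i j - 1)) :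
    ∀ y : Fin n → Fin m → ℕ, (∀ j, ∑ i, y i j = kcopies j) →
      ∑ i, bundleUtil (u i) (y i) / α i ≤ ∑ i, bundleUtil (u i) (x i) / α i :=
  mbb_implies_scaled_sw_max_general kcopies u hmono α p hα x halloc hub hlb
end

section
/- Consider the instance with n = h+s agents (all with identical additive valuations, no caps), h = s(k−1) goods of value K each, and h+s goods of value 1 each, one copy of each good, with integers K ≥ k ≥ 1, s ≥ 1. The allocation x where h agents each get one value-K good and one value-1 good, and s agents each get one value-1 good, satisfies NSW(OPT)/NSW(x) = (K/(K+1))^{(k−1)/k} · k^{1/k}, where OPT assigns a value-K good each to h agents and k value-1 goods each to the remaining s agents. In particular, for k = 3 and K = 666 this ratio exceeds 1.44. -/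
/-! Under `opt` the first `h` agents hold `K` and the other `s` hold `k`; under `alg` they hold
`K + 1` and `1`. So the ratio of the two geometric means is `((K/(K+1))^h k^s)^(1/(h+s))`, and
`h + s = s k` turns the exponents into `(k-1)/k` and `1/k`. For `k = 3`, `K = 666` the bound
`1.44 < (666/667)^(2/3) 3^(1/3)` follows by cubing. -/

open Finset

/-- Nash social welfare of an allocation of single-copy goods with identical
additive valuations given by `w`. -/
noncomputable def nswId {n : ℕ} {G : Type*} [Fintype G] (w : G → ℝ)
    (x : G → Fin n) : ℝ :=
  (∏ i, ∑ j ∈ univ.filter (fun j => x j = i), w j) ^ (1 / (n : ℝ))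

lemma sum_filter_sumElim_const {α β γ M : Type*} [Fintype α] [Fintype β] [DecidableEq γ]
    [AddCommMonoid M] (f : α → γ) (g : β → γ) (a b : M) (i : γ) :
    ∑ j ∈ univ.filter (fun j => Sum.elim f g j = i), Sum.elim (fun _ => a) (fun _ => b) j =
      #{t | f t = i} • a + #{t | g t = i} • b := by
  rw [sum_filter, Fintype.sum_sum_type]
  exact congrArg₂ (· + ·) ((sum_filter _ _).symm.trans (sum_const _))
    ((sum_filter _ _).symm.trans (sum_const _))

lemma card_filter_eq_one_of_injective {α β : Type*} [Fintype α] [DecidableEq β] {f : α → β}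
    (hf : Function.Injective f) {a : α} {b : β} (hab : f a = b) : #{t | f t = b} = 1 :=
  card_eq_one.2 ⟨a, by ext; simp [← hab, hf.eq_iff]⟩

lemma card_filter_castAdd_eq_natAdd {h s : ℕ} (j : Fin s) :
    #{t : Fin h | Fin.castAdd s t = Fin.natAdd h j} = 0 := by
  simp only [card_eq_zero, filter_eq_empty_iff, Fin.ext_iff, Fin.val_castAdd, Fin.val_natAdd]
  omega

lemma card_filter_val_div_eq {m k j : ℕ} (hk : 0 < k) (hj : (j + 1) * k ≤ m) :
    #{t : Fin m | (t : ℕ) / k = j} = k := by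
  rw [← card_map Fin.valEmbedding]
  change #((univ.filter ((fun t => t / k = j) ∘ Fin.valEmbedding)).map _) = k
  rw [← filter_map, Fin.map_valEmbedding_univ]
  rw [add_one_mul] at hj
  have fiber_eq_Ico : (Iio m).filter (fun t => t / k = j) = Ico (j * k) (j * k + k) := by
    ext t
    simp only [mem_filter, mem_Iio, mem_Ico, Nat.div_eq_iff hk]
    omega
  rw [fiber_eq_Ico, Nat.card_Ico, Nat.add_sub_cancel_left]

lemma nswId_eq_of_blocks {G : Type*} [Fintype G] {h s : ℕ} (w : G → ℝ) (x : G → Fin (h + s))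
    {a b : ℝ} (ha : ∀ i, ∑ j ∈ univ.filter (fun j => x j = Fin.castAdd s i), w j = a)
    (hb : ∀ i, ∑ j ∈ univ.filter (fun j => x j = Fin.natAdd h i), w j = b) :
    nswId w x = (a ^ h * b ^ s) ^ (1 / ((h + s : ℕ) : ℝ)) := by
  simp only [nswId, Fin.prod_univ_add, ha, hb, prod_const, card_univ, Fintype.card_fin]

section
variable {h s : ℕ} (a b : ℝ)

lemma nswId_alg :
    nswId (Sum.elim (fun _ => a) fun _ => b)
        (Sum.elim (Fin.castAdd s : Fin h → Fin (h + s)) id) =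
      ((a + b) ^ h * b ^ s) ^ (1 / ((h + s : ℕ) : ℝ)) := by
  apply nswId_eq_of_blocks <;> intro i <;> rw [sum_filter_sumElim_const]
  · rw [card_filter_eq_one_of_injective (Fin.castAdd_injective h s) rfl,
      card_filter_eq_one_of_injective (b := Fin.castAdd s i) Function.injective_id rfl,
      one_smul, one_smul]
  · rw [card_filter_castAdd_eq_natAdd,
      card_filter_eq_one_of_injective (b := Fin.natAdd h i) Function.injective_id rfl,
      zero_smul, zero_add, one_smul]

lemma nswId_opt {k : ℕ} (hk : 0 < k) (hsk : h + s = s * k) {g : Fin (h + s) → Fin (h + s)}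
    (hg : ∀ t, (g t : ℕ) = h + t / k) :
    nswId (Sum.elim (fun _ => a) fun _ => b) (Sum.elim (Fin.castAdd s) g) =
      (a ^ h * (k * b) ^ s) ^ (1 / ((h + s : ℕ) : ℝ)) := by
  have card_fiber_castAdd (i : Fin h) : #{t | g t = Fin.castAdd s i} = 0 := by
    simp only [card_eq_zero, filter_eq_empty_iff, Fin.ext_iff, hg, Fin.val_castAdd]
    intro t _ ht
    exact (Nat.le_add_right h _).not_gt (ht ▸ i.isLt)
  have card_fiber_natAdd (i : Fin s) : #{t | g t = Fin.natAdd h i} = k := by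
    simp_rw [Fin.ext_iff, hg, Fin.val_natAdd, Nat.add_left_cancel_iff]
    exact card_filter_val_div_eq hk (hsk ▸ Nat.mul_le_mul_right k i.isLt)
  apply nswId_eq_of_blocks <;> intro i <;> rw [sum_filter_sumElim_const]
  · rw [card_filter_eq_one_of_injective (Fin.castAdd_injective h s) rfl, card_fiber_castAdd,
      one_smul, zero_smul, add_zero]
  · rw [card_filter_castAdd_eq_natAdd, card_fiber_natAdd, zero_smul, zero_add, nsmul_eq_mul]

end

lemma rpow_pow_mul_pow_of_eq_mul_sub_one {x y : ℝ} (hx : 0 ≤ x) (hy : 0 ≤ y) {h s k : ℕ}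
    (hs : s ≠ 0) (hk : 1 ≤ k) (hh : h = s * (k - 1)) :
    (x ^ h * y ^ s) ^ (1 / ((h + s : ℕ) : ℝ)) = x ^ (((k : ℝ) - 1) / k) * y ^ (1 / (k : ℝ)) := by
  have hhR : (h : ℝ) = s * (k - 1) := by rw [hh]; push_cast [Nat.cast_sub hk]; ring
  have hnR : ((h + s : ℕ) : ℝ) = s * k := by push_cast [hhR]; ring
  have hk0 : (k : ℝ) ≠ 0 := by positivity
  rw [Real.mul_rpow (by positivity) (by positivity), ← Real.rpow_natCast x,
    ← Real.rpow_natCast y, ← Real.rpow_mul hx, ← Real.rpow_mul hy, hnR, hhR]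
  congr 2 <;> field_simp

lemma one_point_four_four_lt : (1.44 : ℝ) < (666 / 667) ^ ((2 : ℝ) / 3) * 3 ^ ((1 : ℝ) / 3) := by
  have cube : ((666 / 667 : ℝ) ^ ((2 : ℝ) / 3) * 3 ^ ((1 : ℝ) / 3)) ^ 3 = (666 / 667) ^ 2 * 3 := by
    rw [mul_pow, ← Real.rpow_mul_natCast, ← Real.rpow_mul_natCast] <;> norm_num
  exact lt_of_pow_lt_pow_left₀ 3 (by positivity) (by rw [cube]; norm_num)

/-- The lower-bound instance: `n = h + s` agents with identical additive valuations,
`h = s(k−1)` goods of value `K` and `h + s` goods of value `1`, one copy each.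
The algorithm's allocation `alg` gives each of the first `h` agents one value-`K` good
and one value-`1` good and each of the remaining `s` agents one value-`1` good; `opt`
gives a value-`K` good to each of the first `h` agents and `k` value-`1` goods to each
of the remaining `s` agents.  Then
`NSW(opt)/NSW(alg) = (K/(K+1))^((k−1)/k) · k^(1/k)`, and for `k = 3`, `K = 666`
this ratio exceeds `1.44`. -/
theorem lower_bound_instance (k K s h n : ℕ) (hk : 1 ≤ k)
    (hs : 1 ≤ s) (hh : h = s * (k - 1)) (hn : n = h + s) :
    let w : Fin h ⊕ Fin (h + s) → ℝ := Sum.elim (fun _ => (K : ℝ)) fun _ => 1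
    let alg : Fin h ⊕ Fin (h + s) → Fin n :=
      Sum.elim (fun t => Fin.castLE (by omega) t)
        (fun t => Fin.cast (by omega) t)
    let opt : Fin h ⊕ Fin (h + s) → Fin n :=
      Sum.elim (fun t => Fin.castLE (by omega) t)
        (fun t => ⟨h + t.val / k, by
          have ht : (t : ℕ) < s * k := by
            have := t.isLt
            have hsk : h + s = s * k := by
              subst hh; cases k with
              | zero => omega
              | succ k' => simp [Nat.succ_sub_one]; ring
            omega
          have : (t : ℕ) / k < s := Nat.div_lt_of_lt_mul (by rwa [mul_comm] at ht)
          omega⟩)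
    nswId w opt / nswId w alg =
        ((K : ℝ) / (K + 1)) ^ (((k : ℝ) - 1) / k) * (k : ℝ) ^ (1 / (k : ℝ)) ∧
      (k = 3 → K = 666 → 1.44 < nswId w opt / nswId w alg) := by
  intro w alg opt
  subst hn
  have hsk : h + s = s * k := by rw [hh, ← Nat.mul_add_one, Nat.sub_add_cancel hk]
  have hK : (0 : ℝ) ≤ K := K.cast_nonneg
  have ratio : nswId w opt / nswId w alg =
      ((K : ℝ) / (K + 1)) ^ (((k : ℝ) - 1) / k) * (k : ℝ) ^ (1 / (k : ℝ)) := by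
    rw [show nswId w opt = _ from nswId_opt (K : ℝ) 1 hk hsk fun _ => rfl,
      show nswId w alg = _ from nswId_alg (K : ℝ) 1, mul_one (k : ℝ),
      rpow_pow_mul_pow_of_eq_mul_sub_one hK (by positivity) (by omega) hk hh,
      rpow_pow_mul_pow_of_eq_mul_sub_one (by positivity) zero_le_one (by omega) hk hh,
      Real.one_rpow, mul_one, mul_div_right_comm, Real.div_rpow hK (by positivity)]
  refine ⟨ratio, ?_⟩
  rintro rfl rfl
  rw [ratio]
  convert one_point_four_four_lt using 3 <;> norm_num
end

section
/- Let u_1 ≥ u_2 ≥ ... ≥ u_M ≥ 0 be the (uniform) values of M indivisible goods and c_1 ≥ c_2 ≥ ... ≥ c_n > 0 the utility caps of n agents. Suppose integers h ≥ 0 and k ≥ 0 satisfy h < n−k, and set δ = (Σ_{j=h+1}^M u_j − Σ_{i=n−k+1}^n c_i)/(n−h−k); assume c_{n−k+1} ≤ δ < c_{n−k} and δ < u_h. Then for every integral allocation x of the M goods to the n agents, (∏_i min(c_i, v(x_i)))^{1/n} ≤ (∏_{i=1}^h min(c_i,u_i) · δ^{n−h−k} · ∏_{i=n−k+1}^n c_i)^{1/n},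 where v(x_i) = Σ_{j∈x_i} u_j. -/
/-!
Call the agents `i ≥ n - k` capped: they are exactly those with `c i ≤ δ`. Give agent `i` the
level `ρ i = min (c i) (τ i)`, where `τ i` is the value of the best good of index `< h` it holds,
or `δ` if it holds none. Weight goods of index `< h` by `1` and the others by `u j / δ`; then
`min (c i) (v i) / ρ i` is at most the weight of the bundle of `i`, plus `1 - c i / δ` if `i` is
capped. Summed over the agents this is `h + k + (∑_{j ≥ h} u j - ∑_{i ≥ n-k} c i) / δ = n`, so
AM–GM gives `∏ min (c i) (v i) ≤ ∏ ρ i`. In `∏ ρ i` the capped agents contribute `c i` and the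
uncapped agents without a good of index `< h` contribute `δ`. The remaining `m ≤ h` agents hold
distinct best goods, so sorting them bounds the product of their levels by
`∏_{r < m} min (c r) (u r)`, and each missing factor `min (c r) (u r)`, `m ≤ r < h`, exceeds `δ`.
When `δ = 0`, all goods of index `≥ h` are worthless and, by pigeonhole, some agent holds no other.
-/

open Finset

theorem prod_le_prod_of_sum_div_le_card {ι : Type*} (t : Finset ι) (s ρ : ι → ℝ)
    (hs : ∀ i ∈ t, 0 ≤ s i) (hρ : ∀ i ∈ t, 0 < ρ i) (hsum : ∑ i ∈ t, s i / ρ i ≤ #t) :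
    ∏ i ∈ t, s i ≤ ∏ i ∈ t, ρ i := by
  have hexp : ∀ i ∈ t, s i ≤ ρ i * Real.exp (s i / ρ i - 1) := fun i hi => by
    calc s i = ρ i * (s i / ρ i) := by field_simp [(hρ i hi).ne']
      _ ≤ ρ i * Real.exp (s i / ρ i - 1) := by
        gcongr
        · exact (hρ i hi).le
        · linarith [Real.add_one_le_exp (s i / ρ i - 1)]
  calc ∏ i ∈ t, s i ≤ ∏ i ∈ t, ρ i * Real.exp (s i / ρ i - 1) := prod_le_prod hs hexp
    _ = (∏ i ∈ t, ρ i) * Real.exp (∑ i ∈ t, (s i / ρ i - 1)) := by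
      rw [prod_mul_distrib, Real.exp_sum]
    _ ≤ (∏ i ∈ t, ρ i) * 1 := by
      gcongr
      · exact prod_nonneg fun i hi => (hρ i hi).le
      · rw [Real.exp_le_one_iff, sum_sub_distrib, sum_const, nsmul_one, sub_nonpos]
        exact hsum
    _ = ∏ i ∈ t, ρ i := mul_one _

theorem exists_le_apply_of_lt_card {ι : Type*} {A : Finset ι} {G : ι → ℕ}
    (hG : Set.InjOn G A) {m : ℕ} (hm : m < #A) : ∃ a ∈ A, m ≤ G a := by
  by_contra! hlt
  have := card_le_card_of_injOn G (fun a ha => mem_range.2 (hlt a ha)) hG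
  rw [card_range] at this
  omega

theorem prod_le_prod_range_min {ι : Type*} [DecidableEq ι] {c u : ℕ → ℝ} (hc : Antitone c)
    (hu : Antitone u) (A : Finset ι) {q : ι → ℝ} {G F : ι → ℕ} (hG : Set.InjOn G A)
    (hF : Set.InjOn F A) (hq : ∀ a ∈ A, 0 ≤ q a) (hqc : ∀ a ∈ A, q a ≤ c (G a))
    (hqu : ∀ a ∈ A, q a ≤ u (F a)) :
    ∏ a ∈ A, q a ≤ ∏ r ∈ range #A, min (c r) (u r) := by
  induction A using Finset.induction_on_min_value q with
  | empty => simp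
  | insert a s ha hmin ih =>
    have hsub : (s : Set ι) ⊆ ↑(insert a s) := coe_subset.2 (subset_insert a s)
    -- `q a` is the least of `#s + 1` values, so it lies below the `#s`-th entries of `c` and `u`.
    have hqa : ∀ b ∈ insert a s, q a ≤ q b := by
      simpa using hmin
    have hcard : #s < #(insert a s) := by rw [card_insert_of_notMem ha]; omega
    obtain ⟨b, hb, hGb⟩ := exists_le_apply_of_lt_card hG hcard
    obtain ⟨b', hb', hFb'⟩ := exists_le_apply_of_lt_card hF hcard
    have hqa_le : q a ≤ min (c #s) (u #s) :=
      le_min ((hqa b hb).trans ((hqc b hb).trans (hc hGb)))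
        ((hqa b' hb').trans ((hqu b' hb').trans (hu hFb')))
    rw [prod_insert ha, card_insert_of_notMem ha, prod_range_succ, mul_comm _ (min _ _)]
    exact mul_le_mul hqa_le (ih (hG.mono hsub) (hF.mono hsub) (fun b hb => hq b (by simp [hb]))
      (fun b hb => hqc b (by simp [hb])) (fun b hb => hqu b (by simp [hb])))
      (prod_nonneg fun b hb => hq b (mem_insert_of_mem hb))
      ((hq a (mem_insert_self a s)).trans hqa_le)

theorem prod_range_mul_pow_le {w : ℕ → ℝ} {δ : ℝ} (hδ : 0 ≤ δ) {a b : ℕ} (hab : a ≤ b)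
    (hw : ∀ r < b, δ ≤ w r) (N : ℕ) :
    (∏ r ∈ range a, w r) * δ ^ (b - a + N) ≤ (∏ r ∈ range b, w r) * δ ^ N := by
  have hpow : δ ^ (b - a) ≤ ∏ r ∈ Ico a b, w r := by
    rw [← Nat.card_Ico a b, ← prod_const]
    exact prod_le_prod (fun _ _ => hδ) fun r hr => hw r (mem_Ico.1 hr).2
  have hprod : 0 ≤ ∏ r ∈ range a, w r :=
    prod_nonneg fun r hr => hδ.trans (hw r ((mem_range.1 hr).trans_le hab))
  calc (∏ r ∈ range a, w r) * δ ^ (b - a + N)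
      = (∏ r ∈ range a, w r) * δ ^ (b - a) * δ ^ N := by rw [pow_add, mul_assoc]
    _ ≤ (∏ r ∈ range a, w r) * (∏ r ∈ Ico a b, w r) * δ ^ N := by gcongr
    _ = (∏ r ∈ range b, w r) * δ ^ N := by rw [prod_range_mul_prod_Ico w hab]

@[to_additive]
theorem Fin.prod_filter_le_val_eq_prod_Ico {M : Type*} [CommMonoid M] (f : ℕ → M) (n t : ℕ) :
    ∏ i ∈ univ.filter (fun i : Fin n => t ≤ (i : ℕ)), f i = ∏ i ∈ Ico t n, f i := by
  rw [prod_filter, Fin.prod_univ_eq_prod_range (fun i => if t ≤ i then f i else 1), ← prod_filter]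
  congr 1
  ext i
  simp only [mem_filter, mem_range, mem_Ico]
  omega

namespace NashWelfare

theorem capped_ratio_le {c δ τ e V : ℝ} {ℓ : ℕ} (hc : 0 < c) (hcδ : c ≤ δ) (he : 0 ≤ e)
    (hV : V ≤ ℓ * τ + e) : min c V / c ≤ 1 - c / δ + (ℓ + e / δ) := by
  have hδ : 0 < δ := hc.trans_le hcδ
  have hle_one : min c V / c ≤ 1 := div_le_one_of_le₀ (min_le_left _ _) hc.le
  have hcδ' : c / δ ≤ 1 := div_le_one_of_le₀ hcδ hδ.le
  have heδ : 0 ≤ e / δ := div_nonneg he hδ.le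
  rcases Nat.eq_zero_or_pos ℓ with rfl | hℓ
  · simp only [Nat.cast_zero, zero_mul, zero_add] at hV ⊢
    rcases le_total c e with hce | hec
    · have : c / δ ≤ e / δ := div_le_div_of_nonneg_right hce hδ.le
      linarith
    · -- `e / c ≤ 1 - c / δ + e / δ` is `(c - e) (δ - c) ≥ 0`
      calc min c V / c ≤ e / c := div_le_div_of_nonneg_right ((min_le_right _ _).trans hV) hc.le
        _ ≤ 1 - c / δ + e / δ := by
          rw [div_le_iff₀ hc]
          field_simp
          nlinarith [mul_nonneg (sub_nonneg.2 hec) (sub_nonneg.2 hcδ)]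
  · have : (1 : ℝ) ≤ ℓ := by exact_mod_cast hℓ
    linarith

theorem uncapped_ratio_le {c δ τ e V : ℝ} {ℓ : ℕ} (hδ : 0 < δ) (hδc : δ < c) (hδτ : δ ≤ τ)
    (he : 0 ≤ e) (hV : V ≤ ℓ * τ + e) (hℓ : δ < τ → 0 < ℓ) :
    min c V / min c τ ≤ ℓ + e / δ := by
  rcases le_total c τ with hcτ | hτc
  · rw [min_eq_left hcτ]
    have hle_one : min c V / c ≤ 1 := div_le_one_of_le₀ (min_le_left _ _) (hδ.trans hδc).le
    have : (1 : ℝ) ≤ ℓ := by exact_mod_cast hℓ (hδc.trans_le hcτ)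
    linarith [div_nonneg he hδ.le]
  · have hτ : 0 < τ := hδ.trans_le hδτ
    rw [min_eq_right hτc]
    calc min c V / τ ≤ (ℓ * τ + e) / τ :=
          div_le_div_of_nonneg_right ((min_le_right _ _).trans hV) hτ.le
      _ = ℓ + e / τ := by field_simp
      _ ≤ ℓ + e / δ := by gcongr

variable {n M : ℕ} (x : Fin M → Fin n) (h : ℕ)

/-- The smallest index `< h` of a good held by agent `i`, or `h` if there is none. -/
def firstLarge (i : Fin n) : ℕ :=
  (insert h ((univ.filter fun j => x j = i).image Fin.val)).min' (insert_nonempty _ _)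

theorem firstLarge_le (i : Fin n) : firstLarge x h i ≤ h :=
  min'_le _ _ (mem_insert_self _ _)

theorem firstLarge_le_of_apply_eq {i : Fin n} {j : Fin M} (hj : x j = i) :
    firstLarge x h i ≤ j := by
  unfold firstLarge
  exact min'_le _ _ (mem_insert_of_mem (mem_image_of_mem Fin.val (mem_filter.2 ⟨mem_univ j, hj⟩)))

theorem exists_apply_eq_firstLarge {i : Fin n} (hi : firstLarge x h i < h) :
    ∃ j, x j = i ∧ (j : ℕ) = firstLarge x h i := by
  rcases mem_insert.1 (min'_mem _ _ : firstLarge x h i ∈ _) with heq | hmem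
  · exact absurd heq hi.ne
  · obtain ⟨j, hj, hj_eq⟩ := mem_image.1 hmem
    exact ⟨j, (mem_filter.1 hj).2, hj_eq⟩

theorem injOn_firstLarge : Set.InjOn (firstLarge x h) {i | firstLarge x h i < h} := by
  intro a ha b hb hab
  obtain ⟨j, rfl, hj⟩ := exists_apply_eq_firstLarge x h ha
  obtain ⟨j', rfl, hj'⟩ := exists_apply_eq_firstLarge x h hb
  rw [Fin.ext (hj.trans (hab.trans hj'.symm))]

variable (u : ℕ → ℝ) (δ : ℝ)

/-- The value of the best good of index `< h` held by agent `i`, or `δ` if there is none. -/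
def level (i : Fin n) : ℝ :=
  if firstLarge x h i < h then u (firstLarge x h i) else δ

variable {x h u δ}

theorem le_level (hu : Antitone u) (hδu : 0 < h → δ < u (h - 1)) (i : Fin n) :
    δ ≤ level x h u δ i := by
  unfold level
  split_ifs with hi
  · exact (hδu (by omega)).le.trans (hu (by omega))
  · exact le_rfl

theorem apply_le_level (hu : Antitone u) {i : Fin n} {j : Fin M} (hj : x j = i)
    (hjh : (j : ℕ) < h) : u j ≤ level x h u δ i := by
  have hfirst := firstLarge_le_of_apply_eq x h hj
  rw [level, if_pos (hfirst.trans_lt hjh)]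
  exact hu hfirst

theorem firstLarge_lt_of_lt_level {i : Fin n} (hi : δ < level x h u δ i) :
    firstLarge x h i < h := by
  by_contra hge
  rw [level, if_neg hge] at hi
  exact lt_irrefl _ hi

theorem min_level_eq_of_le (hu : Antitone u) (hδu : 0 < h → δ < u (h - 1)) {c : ℝ}
    (hcδ : c ≤ δ) (i : Fin n) : min c (level x h u δ i) = c :=
  min_eq_left (hcδ.trans (le_level hu hδu i))

theorem min_level_eq_of_not_lt {c : ℝ} (hδc : δ < c) {i : Fin n} (hi : ¬ firstLarge x h i < h) :
    min c (level x h u δ i) = δ := by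
  rw [level, if_neg hi, min_eq_right hδc.le]

theorem min_div_level_le (hu : Antitone u) (hu0 : ∀ j, 0 ≤ u j) (hδ : 0 < δ)
    (hδu : 0 < h → δ < u (h - 1)) {c : ℝ} (hc : 0 < c) (i : Fin n) :
    min c (∑ j ∈ univ.filter (fun j => x j = i), u j) / min c (level x h u δ i) ≤
      (if c ≤ δ then 1 - c / δ else 0) +
        ∑ j ∈ univ.filter (fun j => x j = i), (if (j : ℕ) < h then 1 else u j / δ) := by
  set large := (univ.filter fun j => x j = i).filter fun j : Fin M => (j : ℕ) < h
  set e := ∑ j ∈ (univ.filter fun j => x j = i).filter (fun j : Fin M => ¬ (j : ℕ) < h), u j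
  have he : 0 ≤ e := sum_nonneg fun j _ => hu0 j
  have hV : ∑ j ∈ univ.filter (fun j => x j = i), u j ≤ #large * level x h u δ i + e := by
    rw [← sum_filter_add_sum_filter_not _ (fun j : Fin M => (j : ℕ) < h), ← nsmul_eq_mul]
    gcongr
    refine sum_le_card_nsmul _ _ _ fun j hj => ?_
    obtain ⟨hjx, hjh⟩ := mem_filter.1 hj
    exact apply_le_level hu (mem_filter.1 hjx).2 hjh
  have hweight : ∑ j ∈ univ.filter (fun j => x j = i), (if (j : ℕ) < h then 1 else u j / δ) =
      #large + e / δ := by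
    rw [← sum_filter_add_sum_filter_not _ (fun j : Fin M => (j : ℕ) < h), sum_div]
    congr 1
    · rw [sum_congr rfl fun j hj => if_pos (mem_filter.1 hj).2, sum_const, nsmul_one]
    · exact sum_congr rfl fun j hj => if_neg (mem_filter.1 hj).2
  rw [hweight]
  split_ifs with hcδ
  · rw [min_level_eq_of_le hu hδu hcδ]
    exact capped_ratio_le hc hcδ he hV
  · rw [zero_add]
    refine uncapped_ratio_le hδ (not_le.1 hcδ) (le_level hu hδu i) he hV fun hlt => ?_
    have hfirst := firstLarge_lt_of_lt_level hlt
    obtain ⟨j, hj, hj_eq⟩ := exists_apply_eq_firstLarge x h hfirst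
    exact card_pos.2 ⟨j, mem_filter.2 ⟨mem_filter.2 ⟨mem_univ _, hj⟩, hj_eq ▸ hfirst⟩⟩

variable {c : ℕ → ℝ}

theorem cap_le_iff {k : ℕ} (hc : Antitone c) (hδc₁ : 0 < k → c (n - k) ≤ δ)
    (hδc₂ : δ < c (n - k - 1)) {i : ℕ} (hi : i < n) : c i ≤ δ ↔ n - k ≤ i := by
  constructor
  · intro hcδ
    by_contra hlt
    exact absurd (hδc₂.trans_le (hc (by omega))) (not_lt.2 hcδ)
  · intro hle
    exact (hc hle).trans (hδc₁ (by omega))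

theorem delta_nonneg {k : ℕ} (hu0 : ∀ j, 0 ≤ u j) (hc_pos : ∀ i < n, 0 < c i)
    (hδ : δ = ((∑ j ∈ Ico h M, u j) - ∑ i ∈ Ico (n - k) n, c i) / ((n - h - k : ℕ) : ℝ))
    (hδc₁ : 0 < k → c (n - k) ≤ δ) (hkn : k ≤ n) : 0 ≤ δ := by
  rcases k.eq_zero_or_pos with rfl | hk
  · rw [hδ, Nat.sub_zero, Ico_self, sum_empty, sub_zero]
    exact div_nonneg (sum_nonneg fun j _ => hu0 j) (Nat.cast_nonneg _)
  · exact (hc_pos _ (by omega)).le.trans (hδc₁ hk)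

theorem card_filter_firstLarge_lt_le (S : Finset (Fin n)) :
    #(S.filter fun i => firstLarge x h i < h) ≤ h := by
  simpa using card_le_card_of_injOn (firstLarge x h)
    (fun i hi => mem_range.2 (mem_filter.1 hi).2)
    ((injOn_firstLarge x h).mono fun i hi => (mem_filter.1 (mem_coe.1 hi)).2)

theorem prod_min_eq_zero (hhn : h < n) (hc : ∀ i < n, 0 ≤ c i) (hu0 : ∀ j, 0 ≤ u j)
    (hU : ∑ j ∈ Ico h M, u j = 0) :
    ∏ i : Fin n, min (c i) (∑ j ∈ univ.filter (fun j => x j = i), u j) = 0 := by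
  have hcard : #(univ.filter fun i => firstLarge x h i < h) < #(univ : Finset (Fin n)) :=
    (card_filter_firstLarge_lt_le univ).trans_lt (by simpa using hhn)
  obtain ⟨i, -, hi⟩ := exists_mem_notMem_of_card_lt_card hcard
  have hfirst : h ≤ firstLarge x h i := not_lt.1 fun hlt => hi (mem_filter.2 ⟨mem_univ i, hlt⟩)
  have hworthless : ∀ j : Fin M, x j = i → u j = 0 := fun j hj =>
    (sum_eq_zero_iff_of_nonneg fun j _ => hu0 j).1 hU j
      (mem_Ico.2 ⟨hfirst.trans (firstLarge_le_of_apply_eq x h hj), j.2⟩)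
  refine prod_eq_zero (mem_univ i) ?_
  rw [sum_eq_zero fun j hj => hworthless j (mem_filter.1 hj).2]
  exact min_eq_right (hc i i.2)

theorem sum_min_div_level_le {k : ℕ} (hu : Antitone u) (hu0 : ∀ j, 0 ≤ u j)
    (hc_pos : ∀ i < n, 0 < c i) (hhk : h + k < n) (hhM : h ≤ M)
    (hδ : δ = ((∑ j ∈ Ico h M, u j) - ∑ i ∈ Ico (n - k) n, c i) / ((n - h - k : ℕ) : ℝ))
    (hδpos : 0 < δ) (hcap : ∀ i < n, (c i ≤ δ ↔ n - k ≤ i)) (hδu : 0 < h → δ < u (h - 1)) :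
    ∑ i : Fin n, min (c i) (∑ j ∈ univ.filter (fun j => x j = i), u j) /
      min (c i) (level x h u δ i) ≤ n := by
  have hcapped : ∑ i : Fin n, (if c i ≤ δ then 1 - c i / δ else 0) =
      k - (∑ i ∈ Ico (n - k) n, c i) / δ := by
    rw [← sum_filter, filter_congr fun (i : Fin n) _ => hcap i i.2,
      Fin.sum_filter_le_val_eq_sum_Ico (fun i => 1 - c i / δ), sum_sub_distrib, sum_const,
      Nat.card_Ico, nsmul_one, ← sum_div, Nat.sub_sub_self (by omega)]
  have hweights : ∑ j : Fin M, (if (j : ℕ) < h then 1 else u j / δ) =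
      h + (∑ j ∈ Ico h M, u j) / δ := by
    rw [Fin.sum_univ_eq_sum_range (fun j => if j < h then 1 else u j / δ),
      ← sum_range_add_sum_Ico _ hhM, sum_div,
      sum_congr rfl fun j hj => if_pos (mem_range.1 hj), sum_const, card_range, nsmul_one,
      sum_congr rfl fun j hj => if_neg (not_lt.2 (mem_Ico.1 hj).1)]
  have hratio : ((∑ j ∈ Ico h M, u j) - ∑ i ∈ Ico (n - k) n, c i) / δ = ((n - h - k : ℕ) : ℝ) := by
    rw [div_eq_iff hδpos.ne', hδ, mul_div_cancel₀]
    exact_mod_cast (by omega : n - h - k ≠ 0)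
  calc _ ≤ ∑ i : Fin n, ((if c i ≤ δ then 1 - c i / δ else 0) +
        ∑ j ∈ univ.filter (fun j => x j = i), (if (j : ℕ) < h then 1 else u j / δ)) :=
        sum_le_sum fun i _ => min_div_level_le hu hu0 hδpos hδu (hc_pos i i.2) i
    _ = (k - (∑ i ∈ Ico (n - k) n, c i) / δ) + (h + (∑ j ∈ Ico h M, u j) / δ) := by
      rw [sum_add_distrib, sum_fiberwise, hcapped, hweights]
    _ = k + h + ((∑ j ∈ Ico h M, u j) - ∑ i ∈ Ico (n - k) n, c i) / δ := by ring
    _ = n := by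
      rw [hratio]
      exact_mod_cast (by omega : k + h + (n - h - k) = n)

theorem prod_min_level_filter_le (hu : Antitone u) (hc : Antitone c) (hc_pos : ∀ i < n, 0 < c i)
    (hδ0 : 0 ≤ δ) (hδu : 0 < h → δ < u (h - 1)) (S : Finset (Fin n)) :
    ∏ i ∈ S.filter (fun i => firstLarge x h i < h), min (c i) (level x h u δ i) ≤
      ∏ r ∈ range #(S.filter fun i => firstLarge x h i < h), min (c r) (u r) := by
  refine prod_le_prod_range_min hc hu _ (G := Fin.val) (F := firstLarge x h)
    Fin.val_injective.injOn
    ((injOn_firstLarge x h).mono fun i hi => (mem_filter.1 (mem_coe.1 hi)).2)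
    (fun (i : Fin n) _ => le_min (hc_pos i i.2).le (hδ0.trans (le_level hu hδu i)))
    (fun i _ => min_le_left _ _) fun i hi => ?_
  rw [level, if_pos (mem_filter.1 hi).2]
  exact min_le_right _ _

theorem prod_min_level_le {k : ℕ} (hu : Antitone u) (hc : Antitone c) (hc_pos : ∀ i < n, 0 < c i)
    (hhk : h + k < n) (hδ0 : 0 ≤ δ) (hcap : ∀ i < n, (c i ≤ δ ↔ n - k ≤ i))
    (hδu : 0 < h → δ < u (h - 1)) :
    ∏ i : Fin n, min (c i) (level x h u δ i) ≤
      (∏ r ∈ range h, min (c r) (u r)) * δ ^ (n - h - k) * ∏ i ∈ Ico (n - k) n, c i := by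
  set uncapped := univ.filter fun i : Fin n => ¬ n - k ≤ (i : ℕ)
  set holders := uncapped.filter fun i => firstLarge x h i < h
  set others := uncapped.filter fun i => ¬ firstLarge x h i < h
  have hcard : #holders + #others = n - k := by
    rw [card_filter_add_card_filter_not]
    simp only [uncapped, not_le, Fin.card_filter_val_lt]
    omega
  have hholders : #holders ≤ h := card_filter_firstLarge_lt_le uncapped
  have hw : ∀ r < h, δ ≤ min (c r) (u r) := fun r hr =>
    le_min (not_le.1 (mt (hcap r (by omega)).1 (by omega))).le
      ((hδu (by omega)).le.trans (hu (by omega)))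
  have hC : 0 ≤ ∏ i ∈ Ico (n - k) n, c i := prod_nonneg fun i hi => (hc_pos i (mem_Ico.1 hi).2).le
  calc ∏ i : Fin n, min (c i) (level x h u δ i)
      = (∏ i ∈ univ.filter (fun i : Fin n => n - k ≤ (i : ℕ)), min (c i) (level x h u δ i)) *
        ((∏ i ∈ holders, min (c i) (level x h u δ i)) *
          ∏ i ∈ others, min (c i) (level x h u δ i)) := by
        rw [prod_filter_mul_prod_filter_not, prod_filter_mul_prod_filter_not]
    _ ≤ (∏ i ∈ Ico (n - k) n, c i) *
        ((∏ r ∈ range #holders, min (c r) (u r)) * δ ^ (h - #holders + (n - h - k))) := by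
      rw [prod_congr rfl fun (i : Fin n) hi =>
          min_level_eq_of_le hu hδu ((hcap i i.2).2 (mem_filter.1 hi).2) i,
        Fin.prod_filter_le_val_eq_prod_Ico, prod_eq_pow_card fun (i : Fin n) hi =>
          min_level_eq_of_not_lt (not_le.1 (mt (hcap i i.2).1 (mem_filter.1 (mem_filter.1 hi).1).2))
            (mem_filter.1 hi).2,
        show #others = h - #holders + (n - h - k) by omega]
      gcongr
      exact prod_min_level_filter_le hu hc hc_pos hδ0 hδu uncapped
    _ ≤ (∏ i ∈ Ico (n - k) n, c i) * ((∏ r ∈ range h, min (c r) (u r)) * δ ^ (n - h - k)) :=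
      mul_le_mul_of_nonneg_left (prod_range_mul_pow_le hδ0 hholders hw _) hC
    _ = _ := by ring

end NashWelfare

open NashWelfare

theorem optimal_allocation_upper_bound_general (n M h k : ℕ)
    (u : ℕ → ℝ) (c : ℕ → ℝ)
    (hu_mono : ∀ j j', j ≤ j' → u j' ≤ u j) (hu_nonneg : ∀ j, 0 ≤ u j)
    (hc_mono : ∀ i i', i ≤ i' → c i' ≤ c i) (hc_pos : ∀ i, i < n → 0 < c i)
    (hhk : h + k < n) (hhM : h ≤ M)
    (δ : ℝ)
    (hδ : δ = ((∑ j ∈ Finset.Ico h M, u j) - ∑ i ∈ Finset.Ico (n - k) n, c i) /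
      ((n - h - k : ℕ) : ℝ))
    (hδc₁ : 0 < k → c (n - k) ≤ δ)
    (hδc₂ : δ < c (n - k - 1))
    (hδu : 0 < h → δ < u (h - 1)) :
    ∀ x : Fin M → Fin n,
      (∏ i : Fin n, min (c i)
          (∑ j ∈ univ.filter (fun j => x j = i), u (j : ℕ))) ^ (1 / (n : ℝ)) ≤
        ((∏ i ∈ Finset.range h, min (c i) (u i)) * δ ^ (n - h - k) *
            ∏ i ∈ Finset.Ico (n - k) n, c i) ^ (1 / (n : ℝ)) := by
  intro x
  have hcap : ∀ i < n, (c i ≤ δ ↔ n - k ≤ i) := fun i => cap_le_iff hc_mono hδc₁ hδc₂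
  have hmin_nonneg : ∀ i : Fin n, 0 ≤ min (c i) (∑ j ∈ univ.filter (fun j => x j = i), u j) :=
    fun i => le_min (hc_pos i i.2).le (sum_nonneg fun j _ => hu_nonneg j)
  have hδ0 : 0 ≤ δ := delta_nonneg hu_nonneg hc_pos hδ hδc₁ (by omega)
  refine Real.rpow_le_rpow (prod_nonneg fun i _ => hmin_nonneg i) ?_ (by positivity)
  rcases hδ0.eq_or_lt with hδ0 | hδpos
  · obtain rfl : k = 0 := by
      by_contra hk
      linarith [hc_pos (n - k) (by omega), hδc₁ (Nat.pos_of_ne_zero hk)]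
    rw [← hδ0, Nat.sub_zero, Ico_self, sum_empty, sub_zero, eq_comm, div_eq_zero_iff,
      Nat.cast_eq_zero] at hδ
    rw [prod_min_eq_zero (by omega) (fun i hi => (hc_pos i hi).le) hu_nonneg
      (hδ.resolve_right (by omega)), ← hδ0, zero_pow (by omega), mul_zero, zero_mul]
  · calc _ ≤ ∏ i : Fin n, min (c i) (level x h u δ i) := by
          refine prod_le_prod_of_sum_div_le_card _ _ _ (fun i _ => hmin_nonneg i)
            (fun i _ => lt_min (hc_pos i i.2) (hδpos.trans_le (le_level hu_mono hδu i))) ?_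
          rw [card_univ, Fintype.card_fin]
          exact sum_min_div_level_le hu_mono hu_nonneg hc_pos hhk hhM hδ hδpos hcap hδu
      _ ≤ _ := prod_min_level_le hu_mono hc_mono hc_pos hhk hδ0 hcap hδu

/-- Certified upper bound on the Nash social welfare of the auxiliary problem.
Goods `0, …, M−1` have uniform nonincreasing values `u 0 ≥ … ≥ u (M−1) ≥ 0`,
agents `0, …, n−1` have nonincreasing positive caps `c 0 ≥ … ≥ c (n−1)`.  If `h`, `k`
satisfy `h < n − k`, `δ = (Σ_{j=h}^{M−1} u j − Σ_{i=n−k}^{n−1} c i)/(n−h−k)`,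
`c (n−k) ≤ δ < c (n−k−1)` and `δ < u (h−1)` (the first and last being vacuous when
`k = 0` resp. `h = 0`), then for every integral allocation `x`,
`(∏_i min(c_i, v(x_i)))^{1/n} ≤ (∏_{i<h} min(c_i,u_i) · δ^{n−h−k} · ∏_{i≥n−k} c_i)^{1/n}`. -/
theorem optimal_allocation_upper_bound (n M h k : ℕ) (hn : 0 < n)
    (u : ℕ → ℝ) (c : ℕ → ℝ)
    (hu_mono : ∀ j j', j ≤ j' → u j' ≤ u j) (hu_nonneg : ∀ j, 0 ≤ u j)
    (hc_mono : ∀ i i', i ≤ i' → c i' ≤ c i) (hc_pos : ∀ i, i < n → 0 < c i)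
    (hhk : h + k < n) (hhM : h ≤ M)
    (δ : ℝ)
    (hδ : δ = ((∑ j ∈ Finset.Ico h M, u j) - ∑ i ∈ Finset.Ico (n - k) n, c i) /
      ((n - h - k : ℕ) : ℝ))
    (hδc₁ : 0 < k → c (n - k) ≤ δ)
    (hδc₂ : δ < c (n - k - 1))
    (hδu : 0 < h → δ < u (h - 1)) :
    ∀ x : Fin M → Fin n,
      (∏ i : Fin n, min (c i)
          (∑ j ∈ univ.filter (fun j => x j = i), u (j : ℕ))) ^ (1 / (n : ℝ)) ≤
        ((∏ i ∈ Finset.range h, min (c i) (u i)) * δ ^ (n - h - k) *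
            ∏ i ∈ Finset.Ico (n - k) n, c i) ^ (1 / (n : ℝ)) :=
  optimal_allocation_upper_bound_general n M h k u c hu_mono hu_nonneg hc_mono hc_pos hhk hhM δ hδ
    hδc₁ hδc₂ hδu
end

section
/- There exists an instance with multiple copies per good and no utility caps in which the (unique) allocation maximizing Nash social welfare is not envy-free up to one copy: for s with 2 < s, two agents, good 1 with 5 copies and utilities (s,s,0,0,0) for agent 1 and (s,s,s,0,0) for agent 2, good 2 with 2 copies and utilities (1,0) for agent 1 and (s,s) for agent 2, the allocation giving agent 1 two copies of good 1 and agent 2 three copies of good 1 plus both copies of good 2 maximizes NSW, yet agent 1 envies agent 2 even after removing any single copy from agent 2's bundle, i.e., u_1(x_2 − g) > u_1(x_1) for every item g ∈ x_2. -/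
open Finset

/-- Utility of agent 1 for a bundle with `a` copies of good 1 and `b` copies of good 2,
where agent 1's per-copy utility vectors are `(s,s,0,0,0)` for good 1 and `(1,0)` for
good 2. -/
noncomputable def util1 (s : ℝ) (a b : ℕ) : ℝ :=
  (∑ ℓ ∈ Finset.range a, if ℓ < 2 then s else 0) +
    (∑ ℓ ∈ Finset.range b, if ℓ < 1 then (1 : ℝ) else 0)

/-- Utility of agent 2 for a bundle with `a` copies of good 1 and `b` copies of good 2,
where agent 2's per-copy utility vectors are `(s,s,s,0,0)` for good 1 and `(s,s)` for
good 2. -/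
noncomputable def util2 (s : ℝ) (a b : ℕ) : ℝ :=
  (∑ ℓ ∈ Finset.range a, if ℓ < 3 then s else 0) +
    (∑ ℓ ∈ Finset.range b, if ℓ < 2 then s else 0)

/-- In the multi-copy uncapped instance with two agents, good 1 with 5 copies and
good 2 with 2 copies, the allocation `x` giving agent 1 two copies of good 1 and
agent 2 three copies of good 1 plus both copies of good 2 maximizes Nash social
welfare (uniquely), yet agent 1 envies agent 2 even after the removal of any single
copy from agent 2's bundle. -/
theorem multi_copy_opt_not_EF1 (s : ℝ) (hs : 2 < s) (hs' : s < 2.04) :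
    -- x = ((2,0),(3,2)) maximizes NSW over all allocations (a,b) to agent 1
    (∀ a b : ℕ, a ≤ 5 → b ≤ 2 →
        (util1 s a b * util2 s (5 - a) (2 - b)) ^ ((1 : ℝ) / 2) ≤
          (util1 s 2 0 * util2 s 3 2) ^ ((1 : ℝ) / 2)) ∧
    -- uniqueness of the maximizer
    (∀ a b : ℕ, a ≤ 5 → b ≤ 2 → (a, b) ≠ (2, 0) →
        util1 s a b * util2 s (5 - a) (2 - b) < util1 s 2 0 * util2 s 3 2) ∧
    -- agent 1 envies agent 2 even after removal of one copy of good 1 …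
    util1 s 2 0 < util1 s 2 2 ∧
    -- … and after removal of one copy of good 2
    util1 s 2 0 < util1 s 3 1 := by

  have h0 : (0:ℝ) < s := by linarith
  have hval : util1 s 2 0 * util2 s 3 2 = 10 * s ^ 2 := by
    simp [util1, util2, Finset.sum_range_succ]; ring
  have hstrict : ∀ a b : ℕ, a ≤ 5 → b ≤ 2 → (a, b) ≠ (2, 0) →
      util1 s a b * util2 s (5 - a) (2 - b) < util1 s 2 0 * util2 s 3 2 := by
    intro a b ha hb hne
    rw [hval]
    interval_cases a <;> interval_cases b <;>
      simp_all [util1, util2, Finset.sum_range_succ] <;> nlinarith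
  have hnn : ∀ a b : ℕ, 0 ≤ util1 s a b * util2 s (5 - a) (2 - b) := by
    intro a b
    apply mul_nonneg <;>
    · refine add_nonneg (Finset.sum_nonneg ?_) (Finset.sum_nonneg ?_) <;>
        intro i _ <;> split_ifs <;> linarith
  refine ⟨?_, hstrict, ?_, ?_⟩
  · intro a b ha hb
    apply Real.rpow_le_rpow (hnn a b) _ (by norm_num)
    by_cases h : (a, b) = (2, 0)
    · obtain ⟨h1, h2⟩ := Prod.mk.injEq .. ▸ h
      subst h1; subst h2; norm_num
    · exact (hstrict a b ha hb h).le
  · simp [util1, Finset.sum_range_succ]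
  · simp [util1, Finset.sum_range_succ]
end

section
/- In a δ-large market with no utility caps, suppose the algorithm returns an allocation x, prices p, and scaling factors such that after scaling each agent's utilities so that all α_i = 1, we have (i) x maximizes Σ_i u_i(x_i) over all allocations, and (ii) for every agent k there exists an item g_k ∈ x_k with u_k(x_k − g_k) ≤ (1+4ε)·u_i(x_i) for every agent i. Then NSW(x*)/NSW(x) ≤ (1+4ε)/(1−δ) for any allocation x*. -/
open Finset

/-!
Let `U` be the welfare of `x`, the largest welfare of any allocation. Giving
every item to agent `k` is an allocation, so `u_k(G) ≤ U`, and by δ-largeness each single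
item is worth at most `δU/n` to its owner. Removing `g_k` from `x_k` and comparing with
agent `i` gives `u_k(x_k) ≤ (1+4ε)u_i(x_i) + δU/n`; summing over `k` yields the uniform
lower bound `u_i(x_i) ≥ (1−δ)U/((1+4ε)n)`, hence the same lower bound on `NSW(x)`. On the
other side, AM–GM bounds `NSW(x*)` by the average welfare of `x*`, which is at most `U/n`.
-/

section Market

variable {ι I : Type*} [DecidableEq ι] [Fintype I]

/-- `u_i(x_i)`, where the allocation `x` gives item `j` to agent `x j`. -/
def bundleUtility (u : ι → I → ℝ) (x : I → ι) (i : ι) : ℝ :=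
  ∑ j ∈ univ.filter (fun j => x j = i), u i j

theorem bundleUtility_nonneg {u : ι → I → ℝ} (hu : ∀ i j, 0 ≤ u i j) (x : I → ι) (i : ι) :
    0 ≤ bundleUtility u x i :=
  sum_nonneg fun j _ => hu i j

variable [Fintype ι]

def welfare (u : ι → I → ℝ) (x : I → ι) : ℝ :=
  ∑ i, bundleUtility u x i

theorem welfare_nonneg {u : ι → I → ℝ} (hu : ∀ i j, 0 ≤ u i j) (x : I → ι) :
    0 ≤ welfare u x :=
  sum_nonneg fun i _ => bundleUtility_nonneg hu x i

theorem welfare_const (u : ι → I → ℝ) (k : ι) : welfare u (fun _ => k) = ∑ j, u k j := by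
  rw [welfare, sum_eq_single k]
  · simp [bundleUtility]
  · intro i _ hik
    simp [bundleUtility, Ne.symm hik]
  · simp

theorem sum_le_welfare_of_isMax {u : ι → I → ℝ} {x : I → ι}
    (hmax : ∀ y, welfare u y ≤ welfare u x) (k : ι) : ∑ j, u k j ≤ welfare u x :=
  welfare_const u k ▸ hmax fun _ => k

theorem one_sub_mul_welfare_le_mul_bundleUtility {u : ι → I → ℝ} {x : I → ι} {δ C : ℝ} (hδ : 0 ≤ δ)
    (hlarge : ∀ i j, u i j ≤ δ * (∑ j', u i j') / Fintype.card ι)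
    (hmax : ∀ y, welfare u y ≤ welfare u x)
    (hEF : ∀ k, ∃ g, x g = k ∧ ∀ i, bundleUtility u x k - u k g ≤ C * bundleUtility u x i)
    (i : ι) : (1 - δ) * welfare u x ≤ C * Fintype.card ι * bundleUtility u x i := by
  set U := welfare u x
  have hcard : 0 < Fintype.card ι := Fintype.card_pos_iff.mpr ⟨i⟩
  have hbundle : ∀ k, bundleUtility u x k ≤ C * bundleUtility u x i + δ * U / Fintype.card ι := by
    intro k
    obtain ⟨g, -, hg⟩ := hEF k
    have hitem : u k g ≤ δ * U / Fintype.card ι :=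
      (hlarge k g).trans <| by gcongr; exact sum_le_welfare_of_isMax hmax k
    linarith [hg i]
  have hsum : U ≤ Fintype.card ι * (C * bundleUtility u x i) + δ * U := by
    have := sum_le_card_nsmul univ _ _ fun k _ => hbundle k
    rwa [card_univ, nsmul_eq_mul, mul_add, mul_div_cancel₀ _ (by positivity)] at this
  linarith

end Market

theorem prod_rpow_inv_card_le_sum_div_card {ι : Type*} [Fintype ι] [Nonempty ι]
    {a : ι → ℝ} (ha : ∀ i, 0 ≤ a i) :
    (∏ i, a i) ^ (Fintype.card ι : ℝ)⁻¹ ≤ (∑ i, a i) / Fintype.card ι := by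
  simpa using Real.geom_mean_le_arith_mean univ (fun _ => 1) a (fun _ _ => zero_le_one)
    (by simp [Fintype.card_pos]) fun i _ => ha i

theorem le_prod_rpow_inv_card {ι : Type*} [Fintype ι] [Nonempty ι] {a : ι → ℝ} {c : ℝ}
    (hc : 0 ≤ c) (hca : ∀ i, c ≤ a i) : c ≤ (∏ i, a i) ^ (Fintype.card ι : ℝ)⁻¹ := by
  rw [Real.le_rpow_inv_iff_of_pos hc (prod_nonneg fun i _ => hc.trans (hca i)) (by positivity),
    Real.rpow_natCast]
  have := prod_le_prod (s := univ) (fun _ _ => hc) fun i _ => hca i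
  rwa [prod_const, card_univ] at this

/-- Large-market guarantee.  There are `n` agents and a finite set of items with
additive uncapped utilities `u`.  The market is `δ`-large: every single-item utility
is at most `δ·u_i(G)/n`.  If the returned allocation `x` (after scaling so that all
MBB values equal one) (i) maximizes utilitarian social welfare over all allocations
and (ii) is such that each agent `k` owns an item `g_k` with
`u_k(x_k − g_k) ≤ (1+4ε)·u_i(x_i)` for every agent `i`, then
`NSW(x*)/NSW(x) ≤ (1+4ε)/(1−δ)` for every allocation `x*`. -/
theorem large_market_bound {n : ℕ} (hn : 0 < n) {I : Type*} [Fintype I]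
    (u : Fin n → I → ℝ) (hu : ∀ i j, 0 ≤ u i j)
    (δ ε : ℝ) (hδ0 : 0 < δ) (hδ1 : δ < 1) (hε : 0 < ε)
    (hlarge : ∀ i j, u i j ≤ δ * (∑ j', u i j') / n)
    (x : I → Fin n)
    (hmax : ∀ y : I → Fin n,
      ∑ i, ∑ j ∈ univ.filter (fun j => y j = i), u i j ≤
        ∑ i, ∑ j ∈ univ.filter (fun j => x j = i), u i j)
    (hEF : ∀ k : Fin n, ∃ g, x g = k ∧ ∀ i : Fin n,
      (∑ j ∈ univ.filter (fun j => x j = k), u k j) - u k g ≤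
        (1 + 4 * ε) * ∑ j ∈ univ.filter (fun j => x j = i), u i j) :
    ∀ y : I → Fin n,
      (∏ i, ∑ j ∈ univ.filter (fun j => y j = i), u i j) ^ (1 / (n : ℝ)) ≤
        (1 + 4 * ε) / (1 - δ) *
          (∏ i, ∑ j ∈ univ.filter (fun j => x j = i), u i j) ^ (1 / (n : ℝ)) := by
  intro y
  have : Nonempty (Fin n) := ⟨⟨0, hn⟩⟩
  have hlower (i : Fin n) : (1 - δ) / (1 + 4 * ε) * (welfare u x / n) ≤ bundleUtility u x i := by
    have := one_sub_mul_welfare_le_mul_bundleUtility hδ0.le (by simpa using hlarge) hmax hEF i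
    rw [Fintype.card_fin] at this
    rw [div_mul_div_comm, div_le_iff₀ (by positivity)]
    linarith
  have hwelfare := welfare_nonneg hu x
  have hNSWx := le_prod_rpow_inv_card (by positivity) hlower
  have hNSWy := prod_rpow_inv_card_le_sum_div_card (bundleUtility_nonneg hu y)
  simp only [Fintype.card_fin] at hNSWx hNSWy
  rw [one_div]
  calc (∏ i, bundleUtility u y i) ^ (n : ℝ)⁻¹ ≤ welfare u y / n := hNSWy
    _ ≤ welfare u x / n := by gcongr; exact hmax y
    _ = (1 + 4 * ε) / (1 - δ) * ((1 - δ) / (1 + 4 * ε) * (welfare u x / n)) := by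
      field_simp [show 1 - δ ≠ 0 by linarith, show 1 + 4 * ε ≠ 0 by linarith]
    _ ≤ _ := by gcongr; exact hNSWx
end

section
/- Fix a positive scaling vector α and define uniform utilities u_j = max_i u_{ij}/α_i for each good j. For S a set of goods with |S| > m−n, let a(S) = (Σ_{j∈S} u_j)/(n − (m−|S|)). If S satisfies u_j > a(S) for all j ∉ S and u_h > a(S) for some h ∈ S, then for T = S − {h}: (u_h · a(T)^{n−(m−|T|)})^{1/(n−(m−|S|))} < a(S). Moreover the unique set S with |S| > m−n, u_j > a(S) for all j ∉ S, and u_j ≤ a(S) for all j ∈ S minimizes ∏_{j∉S} u_j · a(S)^{n−(m−|S|)} over all S in 𝒮_α. -/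
open Finset

/-- `a(S) = (Σ_{j∈S} u_j)/(|S| − (m−n))` for a set `S` of goods. -/
noncomputable def aS (n m : ℕ) (uu : Fin m → ℝ) (S : Finset (Fin m)) : ℝ :=
  (∑ j ∈ S, uu j) / ((S.card - (m - n) : ℕ) : ℝ)

/-- The quantity `∏_{j∉S} u_j · a(S)^{n−(m−|S|)}` minimized in the BMV bound. -/
noncomputable def bmvVal (n m : ℕ) (uu : Fin m → ℝ) (S : Finset (Fin m)) : ℝ :=
  (∏ j ∈ Sᶜ, uu j) * aS n m uu S ^ (S.card - (m - n))

-- strict AM-GM core: x * y^l < ((x + l*y)/(l+1))^(l+1)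
lemma amgm_core (l : ℕ) (hl : 1 ≤ l) (x y : ℝ) (hy : 0 ≤ y) (hxy : y < x) :
    x * y ^ l < ((x + l * y) / (l + 1)) ^ (l + 1) := by
  have hx : 0 < x := hy.trans_lt hxy
  have hl1 : (0:ℝ) < (l:ℝ) + 1 := by positivity
  have hM : 0 < (x + l * y) / (l + 1) := by positivity
  rcases eq_or_lt_of_le hy with h0 | hy0
  · rw [← h0, zero_pow (by omega), mul_zero]
    positivity
  · have ha : (0:ℝ) < 1/((l:ℝ)+1) := by positivity
    have hb : (0:ℝ) < (l:ℝ)/((l:ℝ)+1) := by positivity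
    have hab : 1/((l:ℝ)+1) + (l:ℝ)/((l:ℝ)+1) = 1 := by field_simp; ring
    have hcc := strictConcaveOn_log_Ioi.2 (Set.mem_Ioi.mpr hx) (Set.mem_Ioi.mpr hy0)
      (ne_of_gt hxy) ha hb hab
    simp only [smul_eq_mul] at hcc
    have hM' : (1/((l:ℝ)+1)) * x + ((l:ℝ)/((l:ℝ)+1)) * y = (x + l*y)/((l:ℝ)+1) := by ring
    rw [hM'] at hcc
    have h2 : Real.log x + (l:ℝ) * Real.log y < ((l:ℝ)+1) * Real.log ((x + l*y)/((l:ℝ)+1)) := by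
      have := mul_lt_mul_of_pos_left hcc hl1
      calc Real.log x + (l:ℝ) * Real.log y
          = ((l:ℝ)+1) * ((1/((l:ℝ)+1)) * Real.log x + ((l:ℝ)/((l:ℝ)+1)) * Real.log y) := by
            field_simp
        _ < _ := this
    calc x * y ^ l = Real.exp (Real.log x + (l:ℝ) * Real.log y) := by
          rw [Real.exp_add, Real.exp_log hx, Real.exp_nat_mul, Real.exp_log hy0]
      _ < Real.exp (((l:ℝ)+1) * Real.log ((x + l*y)/((l:ℝ)+1))) := Real.exp_lt_exp.mpr h2
      _ = ((x + l * y) / (l + 1)) ^ (l + 1) := by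
          rw [show ((l:ℝ)+1) = ((l+1 : ℕ):ℝ) by push_cast; ring, Real.exp_nat_mul,
            Real.exp_log (show (0:ℝ) < (x + (l:ℝ)*y)/(((l+1:ℕ)):ℝ) by push_cast; exact hM)]

section helpers

variable {n m : ℕ} {uu : Fin m → ℝ}

lemma sum_eq_aS (huu : ∀ j, 0 ≤ uu j) {S : Finset (Fin m)} (hS : m - n < S.card) :
    ∑ j ∈ S, uu j = ((S.card - (m - n) : ℕ) : ℝ) * aS n m uu S := by
  have hk : ((S.card - (m - n) : ℕ) : ℝ) ≠ 0 := by
    have : 0 < S.card - (m - n) := by omega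
    positivity
  rw [aS, mul_div_cancel₀ _ hk]

lemma aS_nonneg (huu : ∀ j, 0 ≤ uu j) (S : Finset (Fin m)) : 0 ≤ aS n m uu S := by
  apply div_nonneg (Finset.sum_nonneg fun j _ => huu j) (by positivity)

lemma aS_mono_subset (huu : ∀ j, 0 ≤ uu j) {S1 S2 : Finset (Fin m)}
    (h2 : m - n < S2.card) (hsub : S2 ⊆ S1)
    (hin : ∀ j ∈ S1, uu j ≤ aS n m uu S1) : aS n m uu S1 ≤ aS n m uu S2 := by
  have hc : S2.card ≤ S1.card := card_le_card hsub
  have h1 : m - n < S1.card := lt_of_lt_of_le h2 hc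
  have hsum : ∑ j ∈ S1, uu j = ∑ j ∈ S2, uu j + ∑ j ∈ S1 \ S2, uu j := by
    rw [add_comm, Finset.sum_sdiff hsub]
  have hdiff : ∑ j ∈ S1 \ S2, uu j ≤ ((S1.card - S2.card : ℕ) : ℝ) * aS n m uu S1 := by
    have := Finset.sum_le_card_nsmul (S1 \ S2) uu (aS n m uu S1)
      (fun x hx => hin x (mem_sdiff.mp hx).1)
    rwa [card_sdiff_of_subset hsub, nsmul_eq_mul] at this
  have e1 := sum_eq_aS (n := n) huu h1
  have e2 := sum_eq_aS (n := n) huu h2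
  have hk2 : (0:ℝ) < ((S2.card - (m - n) : ℕ) : ℝ) := by
    have : 0 < S2.card - (m - n) := by omega
    positivity
  have hcast : ((S1.card - S2.card : ℕ) : ℝ)
      = ((S1.card - (m - n) : ℕ) : ℝ) - ((S2.card - (m - n) : ℕ) : ℝ) := by
    have hnat : S1.card - S2.card = (S1.card - (m - n)) - (S2.card - (m - n)) := by omega
    rw [hnat, Nat.cast_sub (by omega)]
  rw [hcast, sub_mul] at hdiff
  have key : ((S2.card - (m - n) : ℕ) : ℝ) * aS n m uu S1
      ≤ ((S2.card - (m - n) : ℕ) : ℝ) * aS n m uu S2 := by linarith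
  exact le_of_mul_le_mul_left key hk2

lemma cond_unique (huu : ∀ j, 0 ≤ uu j) {S1 S2 : Finset (Fin m)}
    (h1c : m - n < S1.card) (h1o : ∀ j ∉ S1, aS n m uu S1 < uu j)
    (h1i : ∀ j ∈ S1, uu j ≤ aS n m uu S1)
    (h2c : m - n < S2.card) (h2o : ∀ j ∉ S2, aS n m uu S2 < uu j)
    (h2i : ∀ j ∈ S2, uu j ≤ aS n m uu S2) : S1 = S2 := by
  have hB12 : ¬ S1 ⊆ S2 → aS n m uu S2 < aS n m uu S1 := by
    intro hns
    obtain ⟨j, hj1, hj2⟩ := not_subset.mp hns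
    exact lt_of_lt_of_le (h2o j hj2) (h1i j hj1)
  have hB21 : ¬ S2 ⊆ S1 → aS n m uu S1 < aS n m uu S2 := by
    intro hns
    obtain ⟨j, hj2, hj1⟩ := not_subset.mp hns
    exact lt_of_lt_of_le (h1o j hj1) (h2i j hj2)
  apply subset_antisymm
  · by_contra hns
    have ha21 := hB12 hns
    have hsub : S2 ⊆ S1 := by
      by_contra hns2
      exact absurd (hB21 hns2) (by linarith)
    exact absurd (aS_mono_subset huu h2c hsub h1i) (by linarith)
  · by_contra hns
    have ha12 := hB21 hns
    have hsub : S1 ⊆ S2 := by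
      by_contra hns2
      exact absurd (hB12 hns2) (by linarith)
    exact absurd (aS_mono_subset huu h1c hsub h2i) (by linarith)

lemma step_lemma (huu : ∀ j, 0 ≤ uu j) {S : Finset (Fin m)} {h : Fin m} (hhS : h ∈ S)
    (hS : m - n + 1 < S.card) (hh : aS n m uu S < uu h) :
    uu h * aS n m uu (S.erase h) ^ ((S.erase h).card - (m - n))
      < aS n m uu S ^ (S.card - (m - n))
    ∧ aS n m uu (S.erase h) < aS n m uu S := by
  set T := S.erase h with hT
  have hTc : T.card = S.card - 1 := card_erase_of_mem hhS
  have hTd : m - n < T.card := by omega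
  set l : ℕ := T.card - (m - n) with hl
  have hl1 : 1 ≤ l := by omega
  have hkl : S.card - (m - n) = l + 1 := by omega
  have hsumT : ∑ j ∈ T, uu j = (∑ j ∈ S, uu j) - uu h := by
    have := Finset.sum_erase_add S uu hhS
    rw [← hT] at this
    linarith
  have eT := sum_eq_aS (n := n) huu hTd
  have eS := sum_eq_aS (n := n) huu (by omega : m - n < S.card)
  rw [hkl] at eS
  -- aS S = (uu h + l * aS T)/(l+1)
  have hrel : aS n m uu S = (uu h + (l:ℝ) * aS n m uu T) / ((l:ℝ) + 1) := by
    rw [← hl] at eT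
    have : ((l + 1 : ℕ) : ℝ) * aS n m uu S = uu h + (l:ℝ) * aS n m uu T := by
      push_cast at eS ⊢
      nlinarith [eS, eT, hsumT]
    push_cast at this
    field_simp
    linarith
  have hTnonneg : 0 ≤ aS n m uu T := aS_nonneg huu T
  have hyx : aS n m uu T < uu h := by
    rw [hrel] at hh
    have hlpos : (0:ℝ) < (l:ℝ) := by positivity
    have h1 : uu h + (l:ℝ) * aS n m uu T < ((l:ℝ) + 1) * uu h := by
      rw [div_lt_iff₀ (by positivity)] at hh
      linarith
    nlinarith
  have hcore := amgm_core l hl1 (uu h) (aS n m uu T) hTnonneg hyx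
  constructor
  · rw [hkl, hrel]
    exact hcore
  · rw [hrel, lt_div_iff₀ (by positivity)]
    nlinarith [hyx]

end helpers

/-- Fix a positive scaling vector `α` and let `u_j = max_i u_{ij}/α_i`.
If `S` (with `|S| > m−n+1`) satisfies `u_j > a(S)` for all `j ∉ S` and
`u_h > a(S)` for some `h ∈ S`, then for `T = S − {h}` we have
`(u_h · a(T)^{n−(m−|T|)})^{1/(n−(m−|S|))} < a(S)`.  Moreover the unique set `S`
with `|S| > m−n`, `u_j > a(S)` for all `j ∉ S` and `u_j ≤ a(S)` for all `j ∈ S`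
minimizes `∏_{j∉S} u_j · a(S)^{n−(m−|S|)}` over all `S ∈ 𝒮_α`. -/
theorem bmv_minimizing_set {n m : ℕ} (hn : 0 < n) (hnm : n ≤ m)
    (u : Fin n → Fin m → ℝ) (hu : ∀ i j, 0 ≤ u i j)
    (α : Fin n → ℝ) (hα : ∀ i, 0 < α i) :
    let uu : Fin m → ℝ := fun j => ⨆ i, u i j / α i
    (∀ S : Finset (Fin m), ∀ h ∈ S, m - n + 1 < S.card →
        (∀ j ∉ S, aS n m uu S < uu j) → aS n m uu S < uu h →
        (uu h * aS n m uu (S.erase h) ^ ((S.erase h).card - (m - n))) ^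
            (1 / ((S.card - (m - n) : ℕ) : ℝ)) < aS n m uu S) ∧
    (∀ S : Finset (Fin m), m - n < S.card →
        (∀ j ∉ S, aS n m uu S < uu j) → (∀ j ∈ S, uu j ≤ aS n m uu S) →
        (∀ S' : Finset (Fin m), m - n < S'.card →
            (∀ j ∉ S', aS n m uu S' < uu j) →
            bmvVal n m uu S ≤ bmvVal n m uu S') ∧
        (∀ S'' : Finset (Fin m), m - n < S''.card →
            (∀ j ∉ S'', aS n m uu S'' < uu j) →
            (∀ j ∈ S'', uu j ≤ aS n m uu S'') → S'' = S)) := by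
  intro uu
  have huu : ∀ j, 0 ≤ uu j := fun j =>
    Real.iSup_nonneg fun i => div_nonneg (hu i j) (hα i).le
  constructor
  · -- part 1
    intro S h hhS hcard hout hh
    obtain ⟨hcore, _⟩ := step_lemma huu hhS hcard hh
    have hbase : 0 ≤ uu h * aS n m uu (S.erase h) ^ ((S.erase h).card - (m - n)) :=
      mul_nonneg (huu h) (pow_nonneg (aS_nonneg huu (S.erase h)) _)
    have hkpos : (0:ℝ) < ((S.card - (m - n) : ℕ) : ℝ) := by
      have : 0 < S.card - (m - n) := by omega
      positivity
    have haS0 : 0 ≤ aS n m uu S := aS_nonneg huu S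
    calc (uu h * aS n m uu (S.erase h) ^ ((S.erase h).card - (m - n))) ^
            (1 / ((S.card - (m - n) : ℕ) : ℝ))
        < (aS n m uu S ^ (S.card - (m - n))) ^ (1 / ((S.card - (m - n) : ℕ) : ℝ)) :=
          Real.rpow_lt_rpow hbase hcore (by positivity)
      _ = aS n m uu S := by
          rw [← Real.rpow_natCast (aS n m uu S) (S.card - (m - n)),
            ← Real.rpow_mul haS0, mul_one_div, div_self (ne_of_gt hkpos), Real.rpow_one]
  · -- part 2
    intro S hSc hSo hSi
    have main : ∀ N : ℕ, ∀ S' : Finset (Fin m), S'.card ≤ N → m - n < S'.card →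
        (∀ j ∉ S', aS n m uu S' < uu j) → bmvVal n m uu S ≤ bmvVal n m uu S' := by
      intro N
      induction N with
      | zero => intro S' hle hc _; omega
      | succ N ih =>
        intro S' hle hc hout
        by_cases hall : ∀ j ∈ S', uu j ≤ aS n m uu S'
        · rw [cond_unique huu hSc hSo hSi hc hout hall]
        · push_neg at hall
          obtain ⟨h, hhS, hh⟩ := hall
          have hcard : m - n + 1 < S'.card := by
            by_contra hnc
            have hc1 : S'.card - (m - n) = 1 := by omega
            have : aS n m uu S' = ∑ j ∈ S', uu j := by
              rw [aS, hc1]; simp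
            have hle2 : uu h ≤ ∑ j ∈ S', uu j :=
              Finset.single_le_sum (fun i _ => huu i) hhS
            linarith
          obtain ⟨hcore, hTlt⟩ := step_lemma huu hhS hcard hh
          set T := S'.erase h with hT
          have hTc : T.card = S'.card - 1 := card_erase_of_mem hhS
          have hTd : m - n < T.card := by omega
          have hToutside : ∀ j ∉ T, aS n m uu T < uu j := by
            intro j hj
            rcases Decidable.em (j = h) with rfl | hne
            · linarith
            · have : j ∉ S' := fun hjS => hj (mem_erase.mpr ⟨hne, hjS⟩)
              exact lt_trans hTlt (hout j this)
          have hIH := ih T (by omega) hTd hToutside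
          refine le_trans hIH ?_
          -- bmvVal T ≤ bmvVal S'
          have hcompl : Tᶜ = insert h S'ᶜ := compl_erase
          have hhnc : h ∉ S'ᶜ := by simp [hhS]
          have hprod : ∏ j ∈ Tᶜ, uu j = uu h * ∏ j ∈ S'ᶜ, uu j := by
            rw [hcompl, prod_insert hhnc]
          have hprodnn : 0 ≤ ∏ j ∈ S'ᶜ, uu j := Finset.prod_nonneg fun j _ => huu j
          rw [bmvVal, bmvVal, hprod]
          calc uu h * (∏ j ∈ S'ᶜ, uu j) * aS n m uu T ^ (T.card - (m - n))
              = (∏ j ∈ S'ᶜ, uu j) * (uu h * aS n m uu T ^ (T.card - (m - n))) := by ring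
            _ ≤ (∏ j ∈ S'ᶜ, uu j) * (aS n m uu S' ^ (S'.card - (m - n))) :=
                mul_le_mul_of_nonneg_left (le_of_lt hcore) hprodnn
    constructor
    · intro S' hc hout
      exact main S'.card S' le_rfl hc hout
    · intro S'' hc hout hin
      exact cond_unique huu hc hout hin hSc hSo hSi
end

section
/- The BMV bound is an upper bound on Nash social welfare: for any positive scaling vector α, any set S ∈ 𝒮_α, and any integral allocation x of the m goods to the n agents, (∏_i u_i(x_i))^{1/n} ≤ (∏_{j∉S} u_j · a(S)^{n−(m−|S|)} · ∏_i α_i)^{1/n}, where u_j = max_i u_{ij}/α_i and a(S) = Σ_{j∈S} u_j/(|S|−(m−n)). -/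
open Finset

lemma amgm {n : ℕ} (hn : 0 < n) (f : Fin n → ℝ) (hf : ∀ i, 0 ≤ f i)
    (c : ℝ) (hsum : ∑ i, f i = n * c) :
    ∏ i, f i ≤ c ^ n := by
  have hnR : (0:ℝ) < n := by exact_mod_cast hn
  have hc : 0 ≤ c := by
    have h0 : 0 ≤ ∑ i, f i := Finset.sum_nonneg fun i _ => hf i
    rw [hsum] at h0
    nlinarith
  have h := Real.geom_mean_le_arith_mean_weighted univ (fun _ => 1 / (n:ℝ)) f
    (fun i _ => by positivity) (by simp; field_simp) (fun i _ => hf i)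
  have hrhs : ∑ i, (1 / (n:ℝ)) * f i = c := by
    rw [← Finset.mul_sum, hsum]; field_simp
  rw [hrhs] at h
  have h2 := pow_le_pow_left₀ (Finset.prod_nonneg fun i _ => Real.rpow_nonneg (hf i) _) h n
  calc ∏ i, f i = ∏ i, (f i ^ (1/(n:ℝ))) ^ n := by
        refine Finset.prod_congr rfl fun i _ => ?_
        rw [← Real.rpow_natCast (f i ^ (1/(n:ℝ))) n, ← Real.rpow_mul (hf i)]
        rw [one_div, inv_mul_cancel₀ (by positivity), Real.rpow_one]
    _ = (∏ i, f i ^ (1/(n:ℝ)))^n := by rw [Finset.prod_pow]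
    _ ≤ c ^ n := h2


lemma lemA {ι : Type*} [DecidableEq ι] (a : ℝ) (ha : 0 ≤ a) (v : ι → ℝ) :
    ∀ C : Finset ι, (∀ j ∈ C, a ≤ v j) → ∀ s : ℝ, 0 ≤ s →
      a ^ C.card * ((∑ j ∈ C, v j) + s) ≤ (∏ j ∈ C, v j) * (s + C.card * a) := by
  intro C
  induction C using Finset.induction_on with
  | empty => intro _ s hs; simp
  | @insert w C hwC ih =>
    intro hv s hs
    have hvw : a ≤ v w := hv w (Finset.mem_insert_self _ _)
    have hvw0 : 0 ≤ v w := le_trans ha hvw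
    have hIH := ih (fun j hj => hv j (Finset.mem_insert_of_mem hj)) (s + v w)
      (by positivity)
    have hprod : 0 ≤ ∏ j ∈ C, v j :=
      Finset.prod_nonneg fun j hj => le_trans ha (hv j (Finset.mem_insert_of_mem hj))
    rw [Finset.card_insert_of_notMem hwC, Finset.sum_insert hwC, Finset.prod_insert hwC]
    push_cast
    rw [pow_succ]
    have hr : (0:ℝ) ≤ (C.card : ℝ) := Nat.cast_nonneg _
    nlinarith [mul_le_mul_of_nonneg_left hIH ha,
      mul_nonneg hprod (mul_nonneg (sub_nonneg.2 hvw) hs),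
      mul_nonneg hprod (mul_nonneg (mul_nonneg hr ha) (sub_nonneg.2 hvw)),
      pow_nonneg ha C.card]

lemma core {n m : ℕ} (hn : 0 < n) (v : Fin m → ℝ) (hv : ∀ j, 0 ≤ v j)
    (a : ℝ) (ha : 0 ≤ a) (S : Finset (Fin m)) (x : Fin m → Fin n)
    (hvS : ∀ j ∉ S, a ≤ v j)
    (e : ℕ) (he : 0 < e) (hek : e + Sᶜ.card = n)
    (hsum : ∑ j ∈ S, v j = e * a) :
    ∏ i, ∑ j ∈ univ.filter (fun j => x j = i), v j ≤ (∏ j ∈ Sᶜ, v j) * a ^ e := by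
  classical
  set T : Fin n → ℝ := fun i => ∑ j ∈ univ.filter (fun j => x j = i), v j with hT
  set s : Fin n → ℝ := fun i => ∑ j ∈ S.filter (fun j => x j = i), v j with hsdef
  set c : Fin n → ℝ := fun i => ∑ j ∈ Sᶜ.filter (fun j => x j = i), v j with hcdef
  set r : Fin n → ℕ := fun i => (Sᶜ.filter (fun j => x j = i)).card with hrdef
  have hTsc : ∀ i, T i = s i + c i := by
    intro i
    have hsplit : Finset.univ.filter (fun j => x j = i)
        = S.filter (fun j => x j = i) ∪ Sᶜ.filter (fun j => x j = i) := by
      ext j; simp [Finset.mem_filter]; tauto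
    rw [show T i = ∑ j ∈ univ.filter (fun j => x j = i), v j from rfl, hsplit,
      Finset.sum_union (Finset.disjoint_filter_filter disjoint_compl_right)]
  have hs0 : ∀ i, 0 ≤ s i := fun i => Finset.sum_nonneg fun j _ => hv j
  have hc0 : ∀ i, 0 ≤ c i := fun i => Finset.sum_nonneg fun j _ => hv j
  have hssum : ∑ i, s i = ∑ j ∈ S, v j :=
    Finset.sum_fiberwise_of_maps_to (fun j _ => Finset.mem_univ (x j)) v
  have hcprod : ∏ i, ∏ j ∈ Sᶜ.filter (fun j => x j = i), v j = ∏ j ∈ Sᶜ, v j :=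
    Finset.prod_fiberwise_of_maps_to (fun j _ => Finset.mem_univ (x j)) v
  have hrsum : ∑ i, r i = Sᶜ.card :=
    (Finset.card_eq_sum_card_fiberwise (fun j _ => Finset.mem_univ (x j))).symm
  rcases eq_or_lt_of_le ha with ha0 | hapos
  · -- a = 0
    rw [← ha0]
    rw [zero_pow he.ne', mul_zero]
    -- find an agent with empty bundle value
    have hvS0 : ∀ j ∈ S, v j = 0 := by
      have := (Finset.sum_eq_zero_iff_of_nonneg (fun j _ => hv j)).mp
        (by rw [hsum, ← ha0, mul_zero])
      exact this
    have hcard : (Sᶜ.image x).card < n := by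
      calc (Sᶜ.image x).card ≤ Sᶜ.card := Finset.card_image_le
        _ < n := by omega
    obtain ⟨i, -, hi⟩ : ∃ i ∈ univ, i ∉ Sᶜ.image x := by
      by_contra h
      push_neg at h
      have : (univ : Finset (Fin n)) ⊆ Sᶜ.image x := fun i hiu => h i hiu
      have := Finset.card_le_card this
      simp at this
      omega
    have hTi : T i = 0 := by
      rw [hT]
      apply Finset.sum_eq_zero
      intro j hj
      simp only [Finset.mem_filter, Finset.mem_univ, true_and] at hj
      by_cases hjS : j ∈ S
      · exact hvS0 j hjS
      · exfalso; exact hi (Finset.mem_image.mpr ⟨j, Finset.mem_compl.mpr hjS, hj⟩)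
    calc ∏ i, T i = 0 := Finset.prod_eq_zero (Finset.mem_univ i) hTi
      _ ≤ 0 := le_rfl
  · -- a > 0
    have key : ∀ i, a ^ r i * T i ≤ (∏ j ∈ Sᶜ.filter (fun j => x j = i), v j) * (s i + r i * a) := by
      intro i
      have := lemA a ha v (Sᶜ.filter (fun j => x j = i))
        (fun j hj => hvS j (Finset.mem_compl.mp (Finset.mem_filter.mp hj).1)) (s i) (hs0 i)
      rw [hTsc i]
      calc a ^ r i * (s i + c i) = a ^ r i * (c i + s i) := by ring
        _ ≤ _ := this
    have hprod : ∏ i, (a ^ r i * T i)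
        ≤ ∏ i, ((∏ j ∈ Sᶜ.filter (fun j => x j = i), v j) * (s i + r i * a)) := by
      apply Finset.prod_le_prod
      · intro i _
        exact mul_nonneg (pow_nonneg ha _) (by rw [hTsc]; exact add_nonneg (hs0 i) (hc0 i))
      · exact fun i _ => key i
    have hL : ∏ i, (a ^ r i * T i) = a ^ Sᶜ.card * ∏ i, T i := by
      rw [Finset.prod_mul_distrib, Finset.prod_pow_eq_pow_sum]
      rw [hrsum]
    have hR : ∏ i, ((∏ j ∈ Sᶜ.filter (fun j => x j = i), v j) * (s i + r i * a))
        = (∏ j ∈ Sᶜ, v j) * ∏ i, (s i + r i * a) := by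
      rw [Finset.prod_mul_distrib, hcprod]
    have hAMGM : ∏ i, (s i + r i * a) ≤ a ^ n := by
      apply amgm hn _ (fun i => add_nonneg (hs0 i) (mul_nonneg (Nat.cast_nonneg _) ha))
      rw [Finset.sum_add_distrib, hssum, hsum, ← Finset.sum_mul]
      have hrc : ∑ i, ((r i : ℕ) : ℝ) = ((Sᶜ.card : ℕ) : ℝ) := by
        rw [← Nat.cast_sum, hrsum]
      have hek' : (e : ℝ) + (Sᶜ.card : ℝ) = n := by exact_mod_cast hek
      nlinarith [hrc, hek']
    have hfinal : a ^ Sᶜ.card * ∏ i, T i ≤ (∏ j ∈ Sᶜ, v j) * a ^ n := by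
      rw [← hL]
      calc ∏ i, (a ^ r i * T i) ≤ _ := hprod
        _ = (∏ j ∈ Sᶜ, v j) * ∏ i, (s i + r i * a) := hR
        _ ≤ (∏ j ∈ Sᶜ, v j) * a ^ n := by
            apply mul_le_mul_of_nonneg_left hAMGM
            exact Finset.prod_nonneg fun j _ => hv j
    have han : (∏ j ∈ Sᶜ, v j) * a ^ n = ((∏ j ∈ Sᶜ, v j) * a ^ e) * a ^ Sᶜ.card := by
      rw [mul_assoc, ← pow_add, hek]
    rw [han] at hfinal
    refine le_of_mul_le_mul_right ?_ (pow_pos hapos Sᶜ.card)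
    calc (∏ i, T i) * a ^ Sᶜ.card = a ^ Sᶜ.card * ∏ i, T i := by ring
      _ ≤ _ := hfinal

/-- The BMV bound is an upper bound on Nash social welfare: for any positive
scaling vector `α`, any `S ∈ 𝒮_α` (i.e. `|S| > m−n` and `u_j > a(S)` for `j ∉ S`,
where `u_j = max_i u_{ij}/α_i`), and any integral allocation `x` of the `m` goods,
`(∏_i u_i(x_i))^{1/n} ≤ (∏_{j∉S} u_j · a(S)^{n−(m−|S|)} · ∏_i α_i)^{1/n}`. -/
theorem bmv_upper_bound {n m : ℕ} (hn : 0 < n) (hnm : n ≤ m)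
    (u : Fin n → Fin m → ℝ) (hu : ∀ i j, 0 ≤ u i j)
    (α : Fin n → ℝ) (hα : ∀ i, 0 < α i)
    (S : Finset (Fin m)) (hScard : m - n < S.card)
    (hS : ∀ j ∉ S, aS n m (fun j => ⨆ i, u i j / α i) S < ⨆ i, u i j / α i)
    (x : Fin m → Fin n) :
    (∏ i, ∑ j ∈ univ.filter (fun j => x j = i), u i j) ^ (1 / (n : ℝ)) ≤
      ((∏ j ∈ Sᶜ, ⨆ i, u i j / α i) *
          aS n m (fun j => ⨆ i, u i j / α i) S ^ (S.card - (m - n)) *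
          ∏ i, α i) ^ (1 / (n : ℝ)) := by
  have : Nonempty (Fin n) := ⟨⟨0, hn⟩⟩
  set v : Fin m → ℝ := fun j => ⨆ i, u i j / α i with hvdef
  have hv0 : ∀ j, 0 ≤ v j := fun j =>
    Real.iSup_nonneg fun i => div_nonneg (hu i j) (hα i).le
  have huv : ∀ i j, u i j ≤ α i * v j := by
    intro i j
    have h1 : u i j / α i ≤ v j :=
      le_ciSup (f := fun i => u i j / α i) (Set.Finite.bddAbove (Set.finite_range _)) i
    calc u i j = α i * (u i j / α i) := by rw [mul_comm, div_mul_cancel₀ _ (hα i).ne']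
      _ ≤ α i * v j := mul_le_mul_of_nonneg_left h1 (hα i).le
  set a : ℝ := aS n m v S with hadef
  have hSm : S.card ≤ m := le_trans (Finset.card_le_card (Finset.subset_univ S))
    (by simp)
  have hScompl : Sᶜ.card = m - S.card := by
    rw [Finset.card_compl, Fintype.card_fin]
  set e : ℕ := S.card - (m - n) with hedef
  have he : 0 < e := by omega
  have hek : e + Sᶜ.card = n := by omega
  have ha : 0 ≤ a := by
    rw [hadef, aS]
    exact div_nonneg (Finset.sum_nonneg fun j _ => hv0 j) (Nat.cast_nonneg _)
  have hsum : ∑ j ∈ S, v j = e * a := by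
    rw [hadef, aS, ← hedef]
    rw [mul_div_cancel₀]
    exact_mod_cast he.ne'
  have hcore := core hn v hv0 a ha S x (fun j hj => (hS j hj).le) e he hek hsum
  have hstep : (∏ i, ∑ j ∈ univ.filter (fun j => x j = i), u i j)
      ≤ (∏ i, α i) * ∏ i, ∑ j ∈ univ.filter (fun j => x j = i), v j := by
    rw [← Finset.prod_mul_distrib]
    apply Finset.prod_le_prod
    · intro i _
      exact Finset.sum_nonneg fun j _ => hu i j
    · intro i _
      rw [Finset.mul_sum]
      exact Finset.sum_le_sum fun j _ => huv i j
  apply Real.rpow_le_rpow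
  · exact Finset.prod_nonneg fun i _ => Finset.sum_nonneg fun j _ => hu i j
  · calc (∏ i, ∑ j ∈ univ.filter (fun j => x j = i), u i j)
        ≤ (∏ i, α i) * ∏ i, ∑ j ∈ univ.filter (fun j => x j = i), v j := hstep
      _ ≤ (∏ i, α i) * ((∏ j ∈ Sᶜ, v j) * a ^ e) := by
          apply mul_le_mul_of_nonneg_left hcore
          exact Finset.prod_nonneg fun i _ => (hα i).le
      _ = (∏ j ∈ Sᶜ, v j) * a ^ e * ∏ i, α i := by ring
  · positivity
end
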